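/- arXiv:1709.10198 — 10 statements merged into one kernel-verified Lean document; each statement's English description precedes it below -/
import Mathlib

section
/- Let σ be a multiset of cardinality d+1 on {1,…,n} and T a multiset of cardinality d₀−1 on {1,…,n} with 1 ≤ d₀ ≤ d+1. Writing T_i = T ⊎ {i}, one has ∑_{i=1}^{n} m(T ⊆ T_i)·m(T_i ⊆ σ) = (d − d₀ + 2)·m(T ⊆ σ). -/
open scoped BigOperators

/-- The multiplicity `m(T ⊆ σ) = ∏ i, C(σ i, T i)` of a multiset `T` in a multiset `σ`
on `{1, …, n}` (multisets encoded as functions `Fin n → ℕ`). -/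
def mult {n : ℕ} (T σ : Fin n → ℕ) : ℕ := ∏ i, (σ i).choose (T i)

/-- The multiset `T ⊎ {i}`. -/
def addOne {n : ℕ} (T : Fin n → ℕ) (i : Fin n) : Fin n → ℕ :=
  Function.update T i (T i + 1)

/-- Let `σ` be a multiset of cardinality `d+1` on `{1,…,n}` and `T` a multiset of
cardinality `d₀ − 1` with `1 ≤ d₀ ≤ d + 1`. Writing `Tᵢ = T ⊎ {i}`, one has
`∑_{i=1}^{n} m(T ⊆ Tᵢ)·m(Tᵢ ⊆ σ) = (d + 2 - d₀)·m(T ⊆ σ)`. -/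
theorem sum_mult_addOne {n d d₀ : ℕ} (hd₀ : 1 ≤ d₀) (hd₀' : d₀ ≤ d + 1)
    (σ T : Fin n → ℕ) (hσ : ∑ i, σ i = d + 1) (hT : ∑ i, T i = d₀ - 1) :
    ∑ i : Fin n, mult T (addOne T i) * mult (addOne T i) σ = (d + 2 - d₀) * mult T σ := by
  have key : ∀ i : Fin n, mult T (addOne T i) * mult (addOne T i) σ
      = (σ i - T i) * mult T σ := by
    intro i
    have h1 : mult T (addOne T i) = T i + 1 := by
      unfold mult addOne
      rw [Finset.prod_eq_single i]
      · simp
      · intro j _ hj; simp [Function.update_of_ne hj]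
      · simp
    have hprod : ∏ j ∈ Finset.univ.erase i, (σ j).choose (Function.update T i (T i + 1) j)
        = ∏ j ∈ Finset.univ.erase i, (σ j).choose (T j) := by
      apply Finset.prod_congr rfl
      intro j hj
      rw [Function.update_of_ne (Finset.ne_of_mem_erase hj)]
    have h2 : mult (addOne T i) σ = (σ i).choose (T i + 1) *
        ∏ j ∈ Finset.univ.erase i, (σ j).choose (T j) := by
      unfold mult addOne
      rw [← Finset.mul_prod_erase Finset.univ _ (Finset.mem_univ i), hprod,
        Function.update_self]
    have h3 : mult T σ = (σ i).choose (T i) *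
        ∏ j ∈ Finset.univ.erase i, (σ j).choose (T j) := by
      unfold mult
      rw [← Finset.mul_prod_erase Finset.univ _ (Finset.mem_univ i)]
    rw [h1, h2, h3]
    have := Nat.choose_succ_right_eq (σ i) (T i)
    calc (T i + 1) * ((σ i).choose (T i + 1) *
          ∏ j ∈ Finset.univ.erase i, (σ j).choose (T j))
        = ((σ i).choose (T i + 1) * (T i + 1)) *
          ∏ j ∈ Finset.univ.erase i, (σ j).choose (T j) := by ring
      _ = ((σ i).choose (T i) * (σ i - T i)) *
          ∏ j ∈ Finset.univ.erase i, (σ j).choose (T j) := by rw [this]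
      _ = (σ i - T i) * ((σ i).choose (T i) *
          ∏ j ∈ Finset.univ.erase i, (σ j).choose (T j)) := by ring
  simp only [key]
  rw [← Finset.sum_mul]
  by_cases h : ∀ i, T i ≤ σ i
  · have hsum : ∑ i, (σ i - T i) = ∑ i, σ i - ∑ i, T i :=
      Finset.sum_tsub_distrib Finset.univ (fun i _ => h i)
    rw [hsum, hσ, hT]
    congr 1
    omega
  · push_neg at h
    obtain ⟨i, hi⟩ := h
    have hz : mult T σ = 0 := by
      unfold mult
      exact Finset.prod_eq_zero (Finset.mem_univ i) (Nat.choose_eq_zero_of_lt hi)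
    simp [hz]
end

section
/- Let R be an integral domain of characteristic zero, and let (Δ, w) be an R-weighted d-complex on {1,…,n} (Δ a finite set of multisets each of cardinality d+1, w: Δ → R). If for every multiset S of cardinality d on {1,…,n} one has ∑_{σ ∈ Δ} w(σ)·m(S ⊆ σ) = 0, then for every j with 0 ≤ j ≤ d and every multiset S of cardinality j, ∑_{σ ∈ Δ} w(σ)·m(S ⊆ σ) = 0. That is, balancing in degree d implies balancing in all degrees 0 ≤ j ≤ d. -/
open scoped BigOperators

lemma mult_update {n : ℕ} (S σ : Fin n → ℕ) (i : Fin n) (v : ℕ) :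
    mult (Function.update S i v) σ = (σ i).choose v * ∏ k ∈ Finset.univ.erase i, (σ k).choose (S k) := by
  rw [mult, ← Finset.mul_prod_erase _ _ (Finset.mem_univ i), Function.update_self]
  congr 1
  exact Finset.prod_congr rfl fun k hk => by
    rw [Function.update_of_ne (Finset.mem_erase.1 hk).1]

lemma key {n d j : ℕ} (σ S : Fin n → ℕ) (hσ : ∑ i, σ i = d + 1) (hS : ∑ i, S i = j) :
    ∑ i, (S i + 1) * mult (Function.update S i (S i + 1)) σ = (d + 1 - j) * mult S σ := by
  have hms : ∀ i : Fin n, mult S σ = (σ i).choose (S i) * ∏ k ∈ Finset.univ.erase i, (σ k).choose (S k) :=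
    fun i => (Finset.mul_prod_erase _ _ (Finset.mem_univ i)).symm
  have h1 : ∀ i, (S i + 1) * mult (Function.update S i (S i + 1)) σ = (σ i - S i) * mult S σ := by
    intro i
    rw [mult_update, hms i]
    calc (S i + 1) * ((σ i).choose (S i + 1) * ∏ k ∈ Finset.univ.erase i, (σ k).choose (S k))
        = ((σ i).choose (S i + 1) * (S i + 1)) * ∏ k ∈ Finset.univ.erase i, (σ k).choose (S k) := by ring
      _ = ((σ i).choose (S i) * (σ i - S i)) * ∏ k ∈ Finset.univ.erase i, (σ k).choose (S k) := by
          rw [Nat.choose_succ_right_eq]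
      _ = (σ i - S i) * ((σ i).choose (S i) * ∏ k ∈ Finset.univ.erase i, (σ k).choose (S k)) := by ring
  rw [Finset.sum_congr rfl fun i _ => h1 i]
  by_cases h : mult S σ = 0
  · simp [h]
  · have hle : ∀ i, S i ≤ σ i := by
      intro i
      by_contra hlt
      push_neg at hlt
      exact h (Finset.prod_eq_zero (Finset.mem_univ i) (Nat.choose_eq_zero_of_lt hlt))
    rw [← Finset.sum_mul]
    congr 1
    have := Finset.sum_tsub_distrib (s := Finset.univ) (f := σ) (g := S) (fun i _ => hle i)
    rw [this, hσ, hS]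

/-- Let `R` be an integral domain of characteristic zero and `(Δ, w)` an `R`-weighted
`d`-complex on `{1,…,n}`. If `(Δ, w)` is balanced in degree `d`, then it is balanced
in every degree `0 ≤ j ≤ d`. -/
theorem balanced_of_balanced_in_top_degree (R : Type*) [CommRing R] [IsDomain R]
    [CharZero R] (n d : ℕ) (Δ : Finset (Fin n → ℕ)) (hΔ : ∀ σ ∈ Δ, ∑ i, σ i = d + 1)
    (w : (Fin n → ℕ) → R)
    (hbal : ∀ S : Fin n → ℕ, ∑ i, S i = d → ∑ σ ∈ Δ, w σ * (mult S σ : R) = 0) :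
    ∀ j ≤ d, ∀ S : Fin n → ℕ, ∑ i, S i = j → ∑ σ ∈ Δ, w σ * (mult S σ : R) = 0 := by
  suffices H : ∀ k j, j + k = d → ∀ S : Fin n → ℕ, ∑ i, S i = j →
      ∑ σ ∈ Δ, w σ * (mult S σ : R) = 0 by
    intro j hj S hS
    exact H (d - j) j (Nat.add_sub_cancel' hj) S hS
  intro k
  induction k with
  | zero =>
    intro j hj S hS
    exact hbal S (by rw [hS]; omega)
  | succ k ih =>
    intro j hj S hS
    have hd : (d + 1 - j : ℕ) ≠ 0 := by omega
    have hzero : ∀ i : Fin n, ∑ σ ∈ Δ, w σ * (mult (Function.update S i (S i + 1)) σ : R) = 0 := by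
      intro i
      apply ih (j + 1) (by omega)
      rw [Finset.sum_update_of_mem (Finset.mem_univ i), Finset.sdiff_singleton_eq_erase]
      rw [← Finset.add_sum_erase _ _ (Finset.mem_univ i)] at hS
      omega
    have main : ((d + 1 - j : ℕ) : R) * ∑ σ ∈ Δ, w σ * (mult S σ : R) = 0 := by
      calc ((d + 1 - j : ℕ) : R) * ∑ σ ∈ Δ, w σ * (mult S σ : R)
          = ∑ σ ∈ Δ, w σ * ((((d + 1 - j) * mult S σ : ℕ)) : R) := by
            rw [Finset.mul_sum]; apply Finset.sum_congr rfl; intro σ _; push_cast; ring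
        _ = ∑ σ ∈ Δ, w σ * ((∑ i, (S i + 1) * mult (Function.update S i (S i + 1)) σ : ℕ) : R) := by
            apply Finset.sum_congr rfl; intro σ hσ
            rw [key σ S (hΔ σ hσ) hS]
        _ = ∑ σ ∈ Δ, ∑ i, ((S i + 1 : ℕ) : R) * (w σ * (mult (Function.update S i (S i + 1)) σ : R)) := by
            apply Finset.sum_congr rfl; intro σ _
            push_cast [Finset.mul_sum]
            apply Finset.sum_congr rfl; intro i _; ring
        _ = ∑ i, ((S i + 1 : ℕ) : R) * ∑ σ ∈ Δ, w σ * (mult (Function.update S i (S i + 1)) σ : R) := by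
            rw [Finset.sum_comm]
            apply Finset.sum_congr rfl; intro i _
            rw [Finset.mul_sum]
        _ = 0 := by simp [hzero]
    rcases mul_eq_zero.1 main with h | h
    · exact absurd (Nat.cast_eq_zero.1 h) hd
    · exact h
end

section
/- Let R be a ring and let (Δ₁, w₁), (Δ₂, w₂) be balanced weighted complexes of degrees d₁ and d₂ on {1,…,n}. Define the product complex Δ = Δ₁·Δ₂ = {σ₁ ⊎ σ₂ : σ₁ ∈ Δ₁, σ₂ ∈ Δ₂}, weighted by w(σ) = ∑_{(σ₁,σ₂) ∈ Δ₁×Δ₂, σ₁⊎σ₂ = σ} w₁(σ₁)·w₂(σ₂). Then (Δ, w) is a balanced (d₁+d₂+1)-complex. -/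
/-!
The moment `∑ σ, w σ * m(S ⊆ σ)` of a product complex at `S` is, by Vandermonde's identity
`C(a + b, k) = ∑_{i+j=k} C(a, i) C(b, j)` applied coordinatewise, a sum over splittings
`S = S₁ + S₂` of the product of the moment of `(Δ₁, w₁)` at `S₁` and that of `(Δ₂, w₂)` at `S₂`.
If `|S| ≤ d₁ + d₂ + 1` then `|S₁| ≤ d₁` or `|S₂| ≤ d₂`, so each product has a vanishing factor.
-/

open scoped BigOperators

open Finset

theorem mult_add {n : ℕ} (S σ₁ σ₂ : Fin n → ℕ) :
    mult S (σ₁ + σ₂) =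
      ∑ g ∈ Fintype.piFinset (fun i => antidiagonal (S i)),
        mult (fun i => (g i).1) σ₁ * mult (fun i => (g i).2) σ₂ := by
  simp only [mult, Pi.add_apply, Nat.add_choose_eq, prod_univ_sum, prod_mul_distrib]

theorem sum_fst_add_sum_snd_of_mem_piFinset_antidiagonal {n : ℕ} {S : Fin n → ℕ}
    {g : Fin n → ℕ × ℕ} (hg : g ∈ Fintype.piFinset (fun i => antidiagonal (S i))) :
    ∑ i, (g i).1 + ∑ i, (g i).2 = ∑ i, S i := by
  rw [← sum_add_distrib]
  exact sum_congr rfl fun i _ => mem_antidiagonal.mp (Fintype.mem_piFinset.mp hg i)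

theorem Finset.sum_image_sum_fiber_mul {ι κ R : Type*} [DecidableEq κ] [CommSemiring R]
    (s : Finset ι) (g : ι → κ) (u : ι → R) (f : κ → R) :
    ∑ k ∈ s.image g, (∑ i ∈ s.filter (fun i => g i = k), u i) * f k =
      ∑ i ∈ s, u i * f (g i) := by
  rw [← sum_fiberwise_of_maps_to (g := g) fun i hi => mem_image_of_mem g hi]
  refine sum_congr rfl fun k _ => ?_
  rw [sum_mul]
  exact sum_congr rfl fun i hi => by rw [(mem_filter.mp hi).2]

theorem sum_product_mul_mult_add {R : Type*} [CommSemiring R] {n : ℕ}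
    (Δ₁ Δ₂ : Finset (Fin n → ℕ)) (w₁ w₂ : (Fin n → ℕ) → R) (S : Fin n → ℕ) :
    ∑ p ∈ Δ₁ ×ˢ Δ₂, w₁ p.1 * w₂ p.2 * (mult S (p.1 + p.2) : R) =
      ∑ g ∈ Fintype.piFinset (fun i => antidiagonal (S i)),
        (∑ σ ∈ Δ₁, w₁ σ * (mult (fun i => (g i).1) σ : R)) *
          ∑ σ ∈ Δ₂, w₂ σ * (mult (fun i => (g i).2) σ : R) := by
  calc _ = ∑ p ∈ Δ₁ ×ˢ Δ₂, ∑ g ∈ Fintype.piFinset (fun i => antidiagonal (S i)),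
          (w₁ p.1 * (mult (fun i => (g i).1) p.1 : R)) *
            (w₂ p.2 * (mult (fun i => (g i).2) p.2 : R)) := by
        refine sum_congr rfl fun p _ => ?_
        rw [mult_add, Nat.cast_sum, mul_sum]
        exact sum_congr rfl fun g _ => by push_cast; ring
    _ = _ := sum_comm
    _ = _ := sum_congr rfl fun g _ => by rw [sum_product, sum_mul_sum]

theorem product_balanced_general (R : Type*) [CommRing R] {n d₁ d₂ : ℕ}
    (Δ₁ Δ₂ : Finset (Fin n → ℕ)) (w₁ w₂ : (Fin n → ℕ) → R)
    (hb₁ : ∀ S : Fin n → ℕ, ∑ i, S i ≤ d₁ → ∑ σ ∈ Δ₁, w₁ σ * (mult S σ : R) = 0)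
    (hb₂ : ∀ S : Fin n → ℕ, ∑ i, S i ≤ d₂ → ∑ σ ∈ Δ₂, w₂ σ * (mult S σ : R) = 0) :
    ∀ S : Fin n → ℕ, ∑ i, S i ≤ d₁ + d₂ + 1 →
      ∑ σ ∈ (Δ₁ ×ˢ Δ₂).image (fun p => p.1 + p.2),
        (∑ p ∈ (Δ₁ ×ˢ Δ₂).filter (fun p => p.1 + p.2 = σ), w₁ p.1 * w₂ p.2)
          * (mult S σ : R) = 0 := by
  intro S hS
  rw [sum_image_sum_fiber_mul, sum_product_mul_mult_add]
  refine sum_eq_zero fun g hg => ?_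
  have hsplit := sum_fst_add_sum_snd_of_mem_piFinset_antidiagonal hg
  rcases le_or_gt (∑ i, (g i).1) d₁ with h₁ | h₁
  · rw [hb₁ _ h₁, zero_mul]
  · rw [hb₂ _ (by omega), mul_zero]

/-- Let `(Δ₁, w₁)` and `(Δ₂, w₂)` be balanced weighted complexes of degrees `d₁`, `d₂`
over a commutative ring `R`. Then the product complex
`Δ = {σ₁ ⊎ σ₂ : σ₁ ∈ Δ₁, σ₂ ∈ Δ₂}` with the induced weighting
`w(σ) = ∑_{σ₁ ⊎ σ₂ = σ} w₁(σ₁)·w₂(σ₂)` is a balanced `(d₁+d₂+1)`-complex. -/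
theorem product_balanced (R : Type*) [CommRing R] {n d₁ d₂ : ℕ}
    (Δ₁ Δ₂ : Finset (Fin n → ℕ)) (w₁ w₂ : (Fin n → ℕ) → R)
    (hc₁ : ∀ σ ∈ Δ₁, ∑ i, σ i = d₁ + 1) (hc₂ : ∀ σ ∈ Δ₂, ∑ i, σ i = d₂ + 1)
    (hb₁ : ∀ S : Fin n → ℕ, ∑ i, S i ≤ d₁ → ∑ σ ∈ Δ₁, w₁ σ * (mult S σ : R) = 0)
    (hb₂ : ∀ S : Fin n → ℕ, ∑ i, S i ≤ d₂ → ∑ σ ∈ Δ₂, w₂ σ * (mult S σ : R) = 0) :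
    ∀ S : Fin n → ℕ, ∑ i, S i ≤ d₁ + d₂ + 1 →
      ∑ σ ∈ (Δ₁ ×ˢ Δ₂).image (fun p => p.1 + p.2),
        (∑ p ∈ (Δ₁ ×ˢ Δ₂).filter (fun p => p.1 + p.2 = σ), w₁ p.1 * w₂ p.2)
          * (mult S σ : R) = 0 :=
  product_balanced_general R Δ₁ Δ₂ w₁ w₂ hb₁ hb₂
end

section
/- A weighted d-complex (Δ, w) over a commutative ring R on {1,…,n} is balanced (in all degrees 0 ≤ j ≤ d) if and only if the associated homogeneous polynomial P(Δ,w) = ∑_{σ∈Δ} w(σ)·∏_i x_i^{m(i∈σ)} ∈ R[x₁,…,xₙ] ⊆ R[x₁,…,xₙ,y] is invariant under the R-algebra automorphism φ of R[x₁,…,xₙ,y] sending y ↦ y and x_i ↦ x_i + y for all i. -/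
open scoped BigOperators
open MvPolynomial

/-- Exponent finsupp of the monomial `x^T y^(d+1-|T|)`. -/
noncomputable def muExp (d : ℕ) {n : ℕ} (T : Fin n → ℕ) : Option (Fin n) →₀ ℕ :=
  Finsupp.equivFunOnFinite.symm (fun o => o.elim (d + 1 - ∑ i, T i) T)

lemma muExp_none {d n : ℕ} (T : Fin n → ℕ) : muExp d T none = d + 1 - ∑ i, T i := rfl

lemma muExp_some {d n : ℕ} (T : Fin n → ℕ) (i : Fin n) : muExp d T (some i) = T i := rfl

lemma muExp_inj {d n : ℕ} {T S : Fin n → ℕ} (h : muExp d T = muExp d S) : T = S := by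
  funext i
  have := congrFun (congrArg (fun f : Option (Fin n) →₀ ℕ => (f : Option (Fin n) → ℕ)) h) (some i)
  simpa [muExp_some] using this

lemma monomial_one_eq {R : Type*} [CommRing R] {n : ℕ} (u : Option (Fin n) →₀ ℕ) :
    (monomial u (1 : R)) = X none ^ u none * ∏ i : Fin n, X (some i) ^ u (some i) :=
  calc (monomial u (1 : R)) = ∏ o : Option (Fin n), X o ^ u o := by
        rw [← prod_X_pow_eq_monomial]
        exact Finset.prod_subset (Finset.subset_univ _) (by intro x _ hx; simp_all)
    _ = _ := Fintype.prod_option _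

lemma mult_eq_zero_of_lt {n : ℕ} {T σ : Fin n → ℕ} {i : Fin n} (h : σ i < T i) :
    mult T σ = 0 :=
  Finset.prod_eq_zero (Finset.mem_univ i) (Nat.choose_eq_zero_of_lt h)

lemma le_of_mult_ne_zero {n : ℕ} {T σ : Fin n → ℕ} (h : mult T σ ≠ 0) : ∀ i, T i ≤ σ i := by
  intro i
  by_contra hi
  exact h (mult_eq_zero_of_lt (i := i) (by omega))

lemma expand {R : Type*} [CommRing R] {n d : ℕ} (σ : Fin n → ℕ) (hσ : ∑ i, σ i = d + 1) :
    ∏ i : Fin n, ((X (some i) : MvPolynomial (Option (Fin n)) R) + X none) ^ σ i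
      = ∑ T ∈ Fintype.piFinset (fun _ : Fin n => Finset.range (d + 2)),
          (mult T σ : R) • monomial (muExp d T) (1 : R) := by
  have key : ∀ T : Fin n → ℕ,
      ∏ i : Fin n, ((X (some i) : MvPolynomial (Option (Fin n)) R) ^ T i
          * X none ^ (σ i - T i) * ((σ i).choose (T i) : MvPolynomial (Option (Fin n)) R))
        = (mult T σ : R) • monomial (muExp d T) (1 : R) := by
    intro T
    by_cases hT : ∀ i, T i ≤ σ i
    · have hsum : ∑ i, (σ i - T i) = d + 1 - ∑ i, T i := by
        have h1 : ∑ i, (σ i - T i) + ∑ i, T i = ∑ i, σ i := by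
          rw [← Finset.sum_add_distrib]
          exact Finset.sum_congr rfl fun i _ => Nat.sub_add_cancel (hT i)
        omega
      rw [Finset.prod_mul_distrib, Finset.prod_mul_distrib,
        Finset.prod_pow_eq_pow_sum, hsum, monomial_one_eq, muExp_none]
      simp only [muExp_some]
      rw [smul_eq_C_mul, map_natCast (C : R →+* MvPolynomial (Option (Fin n)) R),
        mult, ← Nat.cast_prod]
      ring
    · push_neg at hT
      obtain ⟨i, hi⟩ := hT
      rw [Finset.prod_eq_zero (Finset.mem_univ i)
        (by rw [Nat.choose_eq_zero_of_lt (by omega)]; simp),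
        mult_eq_zero_of_lt (i := i) (show σ i < T i by omega)]
      simp
  calc ∏ i : Fin n, ((X (some i) : MvPolynomial (Option (Fin n)) R) + X none) ^ σ i
      = ∑ T ∈ Fintype.piFinset (fun i : Fin n => Finset.range (σ i + 1)),
          ∏ i : Fin n, ((X (some i) : MvPolynomial (Option (Fin n)) R) ^ T i
            * X none ^ (σ i - T i) * ((σ i).choose (T i) : MvPolynomial (Option (Fin n)) R)) := by
        simp_rw [add_pow]
        rw [Finset.prod_univ_sum]
    _ = ∑ T ∈ Fintype.piFinset (fun _ : Fin n => Finset.range (d + 2)),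
          ∏ i : Fin n, ((X (some i) : MvPolynomial (Option (Fin n)) R) ^ T i
            * X none ^ (σ i - T i) * ((σ i).choose (T i) : MvPolynomial (Option (Fin n)) R)) := by
        apply Finset.sum_subset
        · apply Fintype.piFinset_subset
          intro i
          apply Finset.range_subset_range.2
          have : σ i ≤ ∑ k, σ k := Finset.single_le_sum (fun k _ => Nat.zero_le _) (Finset.mem_univ i)
          omega
        · intro T _ hT
          rw [Fintype.mem_piFinset] at hT
          push_neg at hT
          obtain ⟨i, hi⟩ := hT
          rw [Finset.mem_range] at hi
          exact Finset.prod_eq_zero (Finset.mem_univ i)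
            (by rw [Nat.choose_eq_zero_of_lt (by omega)]; simp)
    _ = _ := Finset.sum_congr rfl fun T _ => key T

/-- A weighted `d`-complex `(Δ, w)` over a commutative ring `R` on `{1,…,n}` is
balanced in all degrees `0 ≤ j ≤ d` if and only if the associated homogeneous
polynomial `P(Δ,w) = ∑_{σ∈Δ} w(σ)·∏ᵢ xᵢ^{m(i∈σ)}` in `R[x₁,…,xₙ] ⊆ R[x₁,…,xₙ,y]`
(variables indexed by `Option (Fin n)`, with `y` the variable `X none`) is invariant
under the `R`-algebra endomorphism sending `y ↦ y` and `xᵢ ↦ xᵢ + y`. -/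
theorem balanced_iff_polynomial_invariant (R : Type*) [CommRing R] {n d : ℕ}
    (Δ : Finset (Fin n → ℕ)) (hcard : ∀ σ ∈ Δ, ∑ i, σ i = d + 1)
    (w : (Fin n → ℕ) → R) :
    (∀ j ≤ d, ∀ S : Fin n → ℕ, ∑ i, S i = j →
        ∑ σ ∈ Δ, w σ * (mult S σ : R) = 0)
      ↔ MvPolynomial.aeval
          (fun o : Option (Fin n) =>
            o.elim (X none) (fun i => X (some i) + X none))
          (∑ σ ∈ Δ, MvPolynomial.C (w σ) *
            ∏ i : Fin n, (X (some i) : MvPolynomial (Option (Fin n)) R) ^ (σ i))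
        = ∑ σ ∈ Δ, MvPolynomial.C (w σ) *
            ∏ i : Fin n, (X (some i) : MvPolynomial (Option (Fin n)) R) ^ (σ i) := by
  classical
  set B : Finset (Fin n → ℕ) := Fintype.piFinset (fun _ : Fin n => Finset.range (d + 2)) with hB
  set c : (Fin n → ℕ) → R := fun T => ∑ σ ∈ Δ, w σ * (mult T σ : R) with hc
  -- expansion of the image polynomial
  have haev : MvPolynomial.aeval
          (fun o : Option (Fin n) =>
            o.elim (X none : MvPolynomial (Option (Fin n)) R) (fun i => X (some i) + X none))
          (∑ σ ∈ Δ, MvPolynomial.C (w σ) *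
            ∏ i : Fin n, (X (some i) : MvPolynomial (Option (Fin n)) R) ^ (σ i))
        = ∑ T ∈ B, c T • monomial (muExp d T) (1 : R) := by
    rw [map_sum]
    have step : ∀ σ ∈ Δ, (MvPolynomial.aeval
          (fun o : Option (Fin n) =>
            o.elim (X none : MvPolynomial (Option (Fin n)) R) (fun i => X (some i) + X none))
          (MvPolynomial.C (w σ) *
            ∏ i : Fin n, (X (some i) : MvPolynomial (Option (Fin n)) R) ^ (σ i)))
        = ∑ T ∈ B, (w σ * (mult T σ : R)) • monomial (muExp d T) (1 : R) := by
      intro σ hσ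
      rw [map_mul, map_prod]
      simp only [map_pow, aeval_X, aeval_C, Option.elim]
      rw [expand σ (hcard σ hσ), algebraMap_eq, Finset.mul_sum]
      refine Finset.sum_congr rfl fun T _ => ?_
      rw [smul_eq_C_mul, smul_eq_C_mul, map_mul, mul_assoc]
    rw [Finset.sum_congr rfl step, Finset.sum_comm]
    exact Finset.sum_congr rfl fun T _ => (Finset.sum_smul).symm
  -- the original polynomial as the top-degree part
  have hP : (∑ σ ∈ Δ, MvPolynomial.C (w σ) *
            ∏ i : Fin n, (X (some i) : MvPolynomial (Option (Fin n)) R) ^ (σ i))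
      = ∑ T ∈ B.filter (fun T => ∑ i, T i = d + 1), c T • monomial (muExp d T) (1 : R) := by
    simp only [hc, Finset.sum_smul]
    rw [Finset.sum_comm]
    refine Finset.sum_congr rfl fun σ hσ => ?_
    rw [Finset.sum_eq_single_of_mem σ ?_ ?_]
    · have hm : mult σ σ = 1 := by simp [mult]
      rw [hm, Nat.cast_one, mul_one, smul_eq_C_mul]
      congr 1
      rw [monomial_one_eq, muExp_none, hcard σ hσ]
      simp only [muExp_some, Nat.sub_self, pow_zero, one_mul]
    · rw [Finset.mem_filter]
      constructor
      · rw [hB, Fintype.mem_piFinset]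
        intro i
        rw [Finset.mem_range]
        have h1 : σ i ≤ ∑ k, σ k := Finset.single_le_sum (fun k _ => Nat.zero_le _) (Finset.mem_univ i)
        have h2 := hcard σ hσ
        omega
      · exact hcard σ hσ
    · intro T hT hne
      rw [Finset.mem_filter] at hT
      have hz : mult T σ = 0 := by
        by_contra h0
        have hle := le_of_mult_ne_zero h0
        have hTσ : T = σ := by
          funext i
          have h1 : ∑ i, T i = ∑ i, σ i := by rw [hT.2, hcard σ hσ]
          by_contra hne2
          have hlt : T i < σ i := lt_of_le_of_ne (hle i) hne2
          have : ∑ k, T k < ∑ k, σ k :=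
            Finset.sum_lt_sum (fun k _ => hle k) ⟨i, Finset.mem_univ i, hlt⟩
          omega
        exact hne hTσ
      rw [hz]
      simp
  rw [haev, hP, ← Finset.sum_filter_add_sum_filter_not B (fun T => ∑ i, T i = d + 1)]
  constructor
  · intro h
    rw [add_eq_left]
    refine Finset.sum_eq_zero fun T hT => ?_
    rw [Finset.mem_filter] at hT
    have hc0 : c T = 0 := by
      by_cases hle : ∑ i, T i ≤ d
      · exact h (∑ i, T i) hle T rfl
      · refine Finset.sum_eq_zero fun σ hσ => ?_
        have hz : mult T σ = 0 := by
          by_contra h0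
          have hle2 := le_of_mult_ne_zero h0
          have h1 : ∑ i, T i ≤ ∑ i, σ i := Finset.sum_le_sum fun i _ => hle2 i
          have h2 := hcard σ hσ
          have h3 := hT.2
          omega
        rw [hz]
        simp
    rw [hc0, zero_smul]
  · intro h j hj S hS
    rw [add_eq_left] at h
    have hmem : S ∈ B.filter (fun T => ¬ ∑ i, T i = d + 1) := by
      rw [Finset.mem_filter]
      constructor
      · rw [hB, Fintype.mem_piFinset]
        intro i
        rw [Finset.mem_range]
        have h1 : S i ≤ ∑ k, S k := Finset.single_le_sum (fun k _ => Nat.zero_le _) (Finset.mem_univ i)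
        omega
      · omega
    have hco := congrArg (MvPolynomial.coeff (muExp d S)) h
    rw [coeff_zero, MvPolynomial.coeff_sum] at hco
    rw [Finset.sum_eq_single_of_mem S hmem ?_] at hco
    · rw [coeff_smul, coeff_monomial, if_pos rfl, smul_eq_mul, mul_one] at hco
      simpa [hc] using hco
    · intro T _ hne
      rw [coeff_smul, coeff_monomial, if_neg, smul_zero]
      intro heq
      exact hne (muExp_inj heq)
end

section
/- Let Δ be a d-complex balanced by a weighting w: Δ → R over a commutative ring R, and let S be a multiset with |S| ≤ d. Then the link Δ*_S = {σ : σ ⊎ S ∈ Δ} is a (d−|S|)-complex balanced by the weighting w*_S(σ) = w(σ ⊎ S)·m(σ ⊆ σ ⊎ S). -/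
/-!
The induced weighting absorbs the factor `m(σ ⊆ σ ⊎ S)`, so that the balancing sum of the link
at `T` becomes, after substituting `τ = σ ⊎ S`, a multiple of the balancing sum of `Δ` at `S ⊎ T`:
both count the ways of placing disjoint copies of `S` and `T` inside `τ`,
`m(τ - S ⊆ τ) · m(T ⊆ τ - S) = m(S ⊎ T ⊆ τ) · m(S ⊆ S ⊎ T)`.
Faces `τ` not containing `S` contribute nothing to the latter sum, since then `m(S ⊎ T ⊆ τ) = 0`.
-/

open scoped BigOperators

open Finset

lemma mult_eq_zero_of_not_le {n : ℕ} {T σ : Fin n → ℕ} (h : ¬T ≤ σ) : mult T σ = 0 := by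
  obtain ⟨i, hi⟩ := not_forall.mp h
  exact prod_eq_zero (mem_univ i) (Nat.choose_eq_zero_of_lt (not_le.mp hi))

lemma mult_sub_mul_mult {n : ℕ} {S σ : Fin n → ℕ} (hS : S ≤ σ) (T : Fin n → ℕ) :
    mult (σ - S) σ * mult T (σ - S) = mult (S + T) σ * mult S (S + T) := by
  simp only [mult, ← prod_mul_distrib]
  refine prod_congr rfl fun i _ => ?_
  simp only [Pi.sub_apply, Pi.add_apply]
  rw [Nat.choose_symm (hS i), Nat.choose_mul (Nat.le_add_right _ _), Nat.add_sub_cancel_left]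

lemma sum_link_mul_mult {R : Type*} [CommSemiring R] {n : ℕ} (Δ : Finset (Fin n → ℕ))
    (w : (Fin n → ℕ) → R) (S T : Fin n → ℕ) :
    ∑ σ ∈ (Δ.filter (fun τ => ∀ i, S i ≤ τ i)).image (fun τ => τ - S),
        (w (σ + S) * (mult σ (σ + S) : R)) * (mult T σ : R)
      = (∑ τ ∈ Δ, w τ * (mult (S + T) τ : R)) * (mult S (S + T) : R) := by
  have hcancel : ∀ τ ∈ Δ.filter (fun τ => ∀ i, S i ≤ τ i), τ - S + S = τ :=
    fun τ hτ => tsub_add_cancel_of_le (mem_filter.mp hτ).2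
  have hoff : ∀ τ ∈ Δ, w τ * (mult (S + T) τ : R) * (mult S (S + T) : R) ≠ 0 →
      ∀ i, S i ≤ τ i := by
    intro τ _ hne
    by_contra hS
    refine hne ?_
    have hST : ¬S + T ≤ τ := fun h => hS fun i => (Nat.le_add_right (S i) (T i)).trans (h i)
    rw [mult_eq_zero_of_not_le hST, Nat.cast_zero, mul_zero, zero_mul]
  rw [sum_image fun τ₁ h₁ τ₂ h₂ h => by rw [← hcancel τ₁ h₁, ← hcancel τ₂ h₂, h], sum_mul,
    ← sum_filter_of_ne hoff]
  refine sum_congr rfl fun τ hτ => ?_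
  rw [hcancel τ hτ, mul_assoc, mul_assoc, ← Nat.cast_mul, ← Nat.cast_mul,
    mult_sub_mul_mult (mem_filter.mp hτ).2]

theorem link_balanced_general (R : Type*) [CommRing R] {n d k : ℕ}
    (Δ : Finset (Fin n → ℕ)) (w : (Fin n → ℕ) → R)
    (hbal : ∀ T : Fin n → ℕ, ∑ i, T i ≤ d → ∑ σ ∈ Δ, w σ * (mult T σ : R) = 0)
    (S : Fin n → ℕ) (hS : ∑ i, S i = k) (hk : k ≤ d) :
    ∀ T : Fin n → ℕ, ∑ i, T i ≤ d - k →
      ∑ σ ∈ (Δ.filter (fun τ => ∀ i, S i ≤ τ i)).image (fun τ => τ - S),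
        (w (σ + S) * (mult σ (σ + S) : R)) * (mult T σ : R) = 0 := by
  intro T hT
  have hST : ∑ i, (S + T) i ≤ d := by
    simp only [Pi.add_apply, sum_add_distrib, hS]
    omega
  rw [sum_link_mul_mult, hbal (S + T) hST, zero_mul]

/-- Let `Δ` be a `d`-complex balanced by a weighting `w : Δ → R` over a commutative
ring `R`, and `S` a multiset with `|S| = k ≤ d`. Then the link
`Δ*_S = {σ : σ ⊎ S ∈ Δ}` is a `(d−k)`-complex balanced by the induced weighting
`w*_S(σ) = w(σ ⊎ S)·m(σ ⊆ σ ⊎ S)`. -/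
theorem link_balanced (R : Type*) [CommRing R] {n d k : ℕ}
    (Δ : Finset (Fin n → ℕ)) (hcard : ∀ σ ∈ Δ, ∑ i, σ i = d + 1)
    (w : (Fin n → ℕ) → R)
    (hbal : ∀ T : Fin n → ℕ, ∑ i, T i ≤ d → ∑ σ ∈ Δ, w σ * (mult T σ : R) = 0)
    (S : Fin n → ℕ) (hS : ∑ i, S i = k) (hk : k ≤ d) :
    ∀ T : Fin n → ℕ, ∑ i, T i ≤ d - k →
      ∑ σ ∈ (Δ.filter (fun τ => ∀ i, S i ≤ τ i)).image (fun τ => τ - S),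
        (w (σ + S) * (mult σ (σ + S) : R)) * (mult T σ : R) = 0 :=
  link_balanced_general R Δ w hbal S hS hk
end

section
/- Let R be a characteristic zero integral domain, d ≥ 1, and Δ a d-complex with a weighting w: Δ → R. If for every vertex i ∈ Supp(Δ) the induced weighting w*_i on the link Δ*_i = {σ : σ ⊎ {i} ∈ Δ}, given by w*_i(σ) = w(σ ⊎ {i})·m(i ∈ σ⊎{i}), is balanced, then w is a balancing of Δ. -/
open scoped BigOperators

def delta {n : ℕ} (i : Fin n) : Fin n → ℕ := fun j => if j = i then 1 else 0

lemma sub_delta_add {n : ℕ} {τ : Fin n → ℕ} {i : Fin n} (h : 1 ≤ τ i) :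
    τ - delta i + delta i = τ := by
  funext j
  by_cases hj : j = i
  · subst hj
    show τ j - delta j j + delta j j = τ j
    have hd : delta j j = 1 := by simp [delta]
    rw [hd]
    omega
  · simp [delta, hj]

lemma mult_key {n : ℕ} (S τ : Fin n → ℕ) (i : Fin n) (hτ : 1 ≤ τ i) (hS : 1 ≤ S i) :
    τ i * mult (S - delta i) (τ - delta i) = S i * mult S τ := by
  unfold mult
  rw [Finset.prod_eq_mul_prod_sdiff_singleton_of_mem (Finset.mem_univ i)
    (fun j => ((τ - delta i) j).choose ((S - delta i) j)),
    Finset.prod_eq_mul_prod_sdiff_singleton_of_mem (Finset.mem_univ i)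
    (fun j => (τ j).choose (S j))]
  have hrest : ∏ j ∈ Finset.univ \ {i}, ((τ - delta i) j).choose ((S - delta i) j)
      = ∏ j ∈ Finset.univ \ {i}, (τ j).choose (S j) := by
    apply Finset.prod_congr rfl
    intro j hj
    have hj' : j ≠ i := by simpa using (Finset.mem_sdiff.mp hj).2
    simp [delta, hj']
  rw [hrest]
  have hi : τ i * ((τ - delta i) i).choose ((S - delta i) i)
      = S i * (τ i).choose (S i) := by
    have h1 : (τ - delta i) i = τ i - 1 := by simp [delta]
    have h2 : (S - delta i) i = S i - 1 := by simp [delta]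
    rw [h1, h2]
    obtain ⟨a, ha⟩ := Nat.exists_eq_add_of_le hτ
    obtain ⟨b, hb⟩ := Nat.exists_eq_add_of_le hS
    rw [ha, hb, Nat.add_comm 1 a, Nat.add_comm 1 b, Nat.add_sub_cancel, Nat.add_sub_cancel]
    have hx := Nat.add_one_mul_choose_eq a b
    rw [hx]; ring
  rw [← mul_assoc, ← mul_assoc, hi]

lemma key_s10 (R : Type*) [CommRing R] [IsDomain R] [CharZero R]
    {n d : ℕ} (Δ : Finset (Fin n → ℕ)) (w : (Fin n → ℕ) → R)
    (hlink : ∀ i : Fin n, (∃ σ ∈ Δ, 1 ≤ σ i) →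
      ∀ T : Fin n → ℕ, ∑ j, T j ≤ d - 1 →
        ∑ σ ∈ (Δ.filter (fun τ => 1 ≤ τ i)).image (fun τ => τ - delta i),
          (w (σ + delta i) * ((σ i + 1 : ℕ) : R)) * (mult T σ : R) = 0)
    (S : Fin n → ℕ) (hS : ∑ j, S j ≤ d) (i : Fin n) (hSi : 1 ≤ S i) :
    ∑ σ ∈ Δ, w σ * (mult S σ : R) = 0 := by
  by_cases h : ∃ σ ∈ Δ, 1 ≤ σ i
  · have hT : ∑ j, (S - delta i) j ≤ d - 1 := by
      have h1 : ∑ j, (S - delta i) j + ∑ j, delta i j = ∑ j, S j := by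
        rw [← Finset.sum_add_distrib]
        apply Finset.sum_congr rfl
        intro j _
        simp only [Pi.sub_apply, delta]
        by_cases hj : j = i
        · subst hj; simp; omega
        · simp [hj]
      have h2 : ∑ j, delta i j = 1 := by simp [delta]
      omega
    have h0 := hlink i h (S - delta i) hT
    rw [Finset.sum_image (by
      intro τ₁ h1 τ₂ h2 heq
      have hτ1 : 1 ≤ τ₁ i := (Finset.mem_filter.mp h1).2
      have hτ2 : 1 ≤ τ₂ i := (Finset.mem_filter.mp h2).2
      have := congrArg (· + delta i) heq
      simpa [sub_delta_add hτ1, sub_delta_add hτ2] using this)] at h0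
    have hterm : ∀ τ ∈ Δ.filter (fun τ => 1 ≤ τ i),
        (w ((τ - delta i) + delta i) * (((τ - delta i) i + 1 : ℕ) : R))
          * (mult (S - delta i) (τ - delta i) : R)
        = (S i : R) * (w τ * (mult S τ : R)) := by
      intro τ hτ
      have hτi : 1 ≤ τ i := (Finset.mem_filter.mp hτ).2
      rw [sub_delta_add hτi]
      have h1 : (τ - delta i) i + 1 = τ i := by simp [delta]; omega
      rw [h1]
      have := mult_key S τ i hτi hSi
      have hcast : (τ i : R) * (mult (S - delta i) (τ - delta i) : R)
          = (S i : R) * (mult S τ : R) := by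
        rw [← Nat.cast_mul, ← Nat.cast_mul, this]
      rw [mul_assoc, hcast]
      ring
    rw [Finset.sum_congr rfl hterm, ← Finset.mul_sum] at h0
    have hSne : (S i : R) ≠ 0 := by
      exact_mod_cast Nat.cast_ne_zero.mpr (by omega)
    have hfil : ∑ τ ∈ Δ.filter (fun τ => 1 ≤ τ i), w τ * (mult S τ : R) = 0 :=
      (mul_eq_zero.mp h0).resolve_left hSne
    rw [← Finset.sum_filter_add_sum_filter_not Δ (fun τ => 1 ≤ τ i), hfil, zero_add]
    apply Finset.sum_eq_zero
    intro τ hτ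
    have hτi : τ i = 0 := by
      have := (Finset.mem_filter.mp hτ).2
      omega
    have : mult S τ = 0 := by
      unfold mult
      apply Finset.prod_eq_zero (Finset.mem_univ i)
      rw [hτi]
      exact Nat.choose_eq_zero_of_lt (by omega)
    rw [this]; simp
  · apply Finset.sum_eq_zero
    intro σ hσ
    have hσi : σ i = 0 := by
      by_contra hc
      exact h ⟨σ, hσ, by omega⟩
    have : mult S σ = 0 := by
      unfold mult
      apply Finset.prod_eq_zero (Finset.mem_univ i)
      rw [hσi]
      exact Nat.choose_eq_zero_of_lt (by omega)
    rw [this]; simp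

/-- Let `R` be a characteristic-zero integral domain, `d ≥ 1`, and `Δ` a `d`-complex
with a weighting `w`. If for each vertex `i ∈ Supp Δ` the induced weighting
`w*_i(σ) = w(σ ⊎ {i})·m(i ∈ σ ⊎ {i})` on the link `Δ*_i = {σ : σ ⊎ {i} ∈ Δ}` is
balanced, then `w` is a balancing of `Δ`. -/
theorem balanced_of_links_balanced (R : Type*) [CommRing R] [IsDomain R] [CharZero R]
    {n d : ℕ} (hd : 1 ≤ d) (Δ : Finset (Fin n → ℕ))
    (hcard : ∀ σ ∈ Δ, ∑ i, σ i = d + 1) (w : (Fin n → ℕ) → R)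
    (hlink : ∀ i : Fin n, (∃ σ ∈ Δ, 1 ≤ σ i) →
      ∀ T : Fin n → ℕ, ∑ j, T j ≤ d - 1 →
        ∑ σ ∈ (Δ.filter (fun τ => 1 ≤ τ i)).image (fun τ => τ - delta i),
          (w (σ + delta i) * ((σ i + 1 : ℕ) : R)) * (mult T σ : R) = 0) :
    ∀ S : Fin n → ℕ, ∑ i, S i ≤ d → ∑ σ ∈ Δ, w σ * (mult S σ : R) = 0 := by
  intro S hS
  by_cases hpos : ∃ i, 1 ≤ S i
  · obtain ⟨i, hi⟩ := hpos
    exact key_s10 R Δ w hlink S hS i hi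
  · push_neg at hpos
    have hS0 : ∀ σ, mult S σ = 1 := by
      intro σ
      unfold mult
      apply Finset.prod_eq_one
      intro j _
      have : S j = 0 := by have := hpos j; omega
      simp [this]
    simp only [hS0, Nat.cast_one, mul_one]
    -- use key with δ_i summed over i
    have hkey : ∀ i : Fin n, ∑ σ ∈ Δ, w σ * ((σ i : ℕ) : R) = 0 := by
      intro i
      have hmd : ∀ σ : Fin n → ℕ, mult (delta i) σ = σ i := by
        intro σ
        unfold mult
        rw [Finset.prod_eq_single i]
        · simp [delta]
        · intro j _ hj; simp [delta, hj]
        · simp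
      have := key_s10 R Δ w hlink (delta i) (by simp [delta]; omega) i (by simp [delta])
      simpa [hmd] using this
    have hsum : ∑ i : Fin n, ∑ σ ∈ Δ, w σ * ((σ i : ℕ) : R) = 0 := by
      simp [hkey]
    rw [Finset.sum_comm] at hsum
    have : ∑ σ ∈ Δ, w σ * ((d : R) + 1) = 0 := by
      rw [← hsum]
      apply Finset.sum_congr rfl
      intro σ hσ
      rw [← Finset.mul_sum]
      have hc : ((∑ i, σ i : ℕ) : R) = (d : R) + 1 := by
        rw [hcard σ hσ]; push_cast; ring
      rw [Nat.cast_sum] at hc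
      rw [hc]
    rw [← Finset.sum_mul] at this
    have hne : ((d : R) + 1) ≠ 0 := by
      have : ((d + 1 : ℕ) : R) ≠ 0 := Nat.cast_ne_zero.mpr (by omega)
      push_cast at this
      exact this
    exact (mul_eq_zero.mp this).resolve_right hne
end

section
/- Let R be an integral domain and let Δ = Δ₁·Δ₂ be a nonempty nonsingular product complex (Δ₁ a d₁-complex, Δ₂ a d₂-complex, necessarily with disjoint supports). Then Δ admits a nondegenerate R-balancing if and only if both Δ₁ and Δ₂ admit nondegenerate R-balancings. -/
/-!
The product complex `Δ₁·Δ₂` is the pointwise sum `Δ₁ + Δ₂` of finsets. Nonsingularity gives a set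
of coordinates `P` carrying `Δ₁` whose complement carries `Δ₂`, and then multiplicities factor:
`m(S ⊆ σ₁ + σ₂) = m(S|P ⊆ σ₁) · m(S|Pᶜ ⊆ σ₂)`. Hence the balancing sums of the product weight
`w₁ · w₂` factor, and one factor vanishes because `|S| ≤ d₁ + d₂ + 1` forces `|S|P| ≤ d₁` or
`|S|Pᶜ| ≤ d₂`. Conversely, a balancing `w` of `Δ₁ + Δ₂` tested at `S + τ₂` with `τ₂ ∈ Δ₂` shows that
`w (· + τ₂)` balances `Δ₁`, since on the pure complex `Δ₂` the multiplicity `m(τ₂ ⊆ σ₂)` is a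
Kronecker delta.
-/

open scoped BigOperators

open Finset
open scoped Pointwise

section Multiplicity

variable {n : ℕ}

theorem mult_eq_zero_iff {T σ : Fin n → ℕ} : mult T σ = 0 ↔ ∃ i, σ i < T i := by
  simp [mult, prod_eq_zero_iff, Nat.choose_eq_zero_iff]

theorem mult_self (σ : Fin n → ℕ) : mult σ σ = 1 := by
  simp [mult]

theorem mult_eq_zero_of_ne_of_sum_eq {T σ : Fin n → ℕ} (hne : σ ≠ T)
    (hsum : ∑ i, T i = ∑ i, σ i) : mult T σ = 0 := by
  refine mult_eq_zero_iff.2 (not_forall_not.1 fun hle => hne ?_)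
  have hcoord := (sum_eq_sum_iff_of_le fun i _ => not_lt.1 (hle i)).1 hsum
  exact funext fun i => (hcoord i (mem_univ i)).symm

theorem mult_eq_zero_of_not_support_subset {T σ : Fin n → ℕ}
    (h : ¬ T.support ⊆ σ.support) : mult T σ = 0 := by
  obtain ⟨i, hT, hσ⟩ := Set.not_subset.1 h
  rw [Function.mem_support] at hT
  rw [Function.notMem_support] at hσ
  exact mult_eq_zero_iff.2 ⟨i, by omega⟩

theorem mult_eq_mul_indicator (P : Set (Fin n)) (T σ : Fin n → ℕ) :
    mult T σ = mult (P.indicator T) (P.indicator σ) * mult (Pᶜ.indicator T) (Pᶜ.indicator σ) := by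
  simp only [mult, ← prod_mul_distrib]
  refine prod_congr rfl fun i _ => ?_
  by_cases hi : i ∈ P <;> simp [hi]

end Multiplicity

section Separated

variable {n : ℕ} {P : Set (Fin n)} {σ₁ σ₂ : Fin n → ℕ}

theorem indicator_add_eq_left (h₁ : σ₁.support ⊆ P) (h₂ : σ₂.support ⊆ Pᶜ) :
    P.indicator (σ₁ + σ₂) = σ₁ := by
  rw [Set.indicator_add', Set.indicator_eq_self.2 h₁,
    Set.indicator_eq_zero'.2 (Set.subset_compl_iff_disjoint_right.1 h₂), add_zero]

theorem indicator_compl_add_eq_right (h₁ : σ₁.support ⊆ P) (h₂ : σ₂.support ⊆ Pᶜ) :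
    Pᶜ.indicator (σ₁ + σ₂) = σ₂ := by
  rw [add_comm]
  exact indicator_add_eq_left h₂ (by rwa [compl_compl])

theorem mult_add_of_support_subset (S : Fin n → ℕ) (h₁ : σ₁.support ⊆ P)
    (h₂ : σ₂.support ⊆ Pᶜ) :
    mult S (σ₁ + σ₂) = mult (P.indicator S) σ₁ * mult (Pᶜ.indicator S) σ₂ := by
  rw [mult_eq_mul_indicator P, indicator_add_eq_left h₁ h₂, indicator_compl_add_eq_right h₁ h₂]

theorem sum_add_of_support_subset {M : Type*} [AddCommMonoid M] {Δ₁ Δ₂ : Finset (Fin n → ℕ)}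
    (h₁ : ∀ σ ∈ Δ₁, σ.support ⊆ P) (h₂ : ∀ σ ∈ Δ₂, σ.support ⊆ Pᶜ) (f : (Fin n → ℕ) → M) :
    ∑ σ ∈ Δ₁ + Δ₂, f σ = ∑ σ₁ ∈ Δ₁, ∑ σ₂ ∈ Δ₂, f (σ₁ + σ₂) := by
  rw [← image_add_product, sum_image, sum_product]
  rintro ⟨σ₁, σ₂⟩ hσ ⟨τ₁, τ₂⟩ hτ (h : σ₁ + σ₂ = τ₁ + τ₂)
  simp only [coe_product, Set.mem_prod, mem_coe] at hσ hτ
  refine Prod.ext ?_ ?_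
  · rw [← indicator_add_eq_left (h₁ _ hσ.1) (h₂ _ hσ.2), h,
      indicator_add_eq_left (h₁ _ hτ.1) (h₂ _ hτ.2)]
  · rw [← indicator_compl_add_eq_right (h₁ _ hσ.1) (h₂ _ hσ.2), h,
      indicator_compl_add_eq_right (h₁ _ hτ.1) (h₂ _ hτ.2)]

end Separated

section Balancing

variable {R : Type*} [CommSemiring R] {n : ℕ}

def IsBalancing (Δ : Finset (Fin n → ℕ)) (deg : ℕ) (w : (Fin n → ℕ) → R) : Prop :=
  ∀ S : Fin n → ℕ, ∑ i, S i ≤ deg → ∑ σ ∈ Δ, w σ * (mult S σ : R) = 0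

variable (R) in
def HasNondegBalancing (Δ : Finset (Fin n → ℕ)) (deg : ℕ) : Prop :=
  ∃ w : (Fin n → ℕ) → R, (∀ σ ∈ Δ, w σ ≠ 0) ∧ IsBalancing Δ deg w

variable {Δ₁ Δ₂ : Finset (Fin n → ℕ)} {d₁ d₂ : ℕ} {P : Set (Fin n)}

theorem IsBalancing.add {w₁ w₂ : (Fin n → ℕ) → R} (hw₁ : IsBalancing Δ₁ d₁ w₁)
    (hw₂ : IsBalancing Δ₂ d₂ w₂) (h₁ : ∀ σ ∈ Δ₁, σ.support ⊆ P)
    (h₂ : ∀ σ ∈ Δ₂, σ.support ⊆ Pᶜ) :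
    IsBalancing (Δ₁ + Δ₂) (d₁ + d₂ + 1) fun σ => w₁ (P.indicator σ) * w₂ (Pᶜ.indicator σ) := by
  intro S hS
  have hfactor : ∑ σ ∈ Δ₁ + Δ₂, w₁ (P.indicator σ) * w₂ (Pᶜ.indicator σ) * (mult S σ : R) =
      (∑ σ₁ ∈ Δ₁, w₁ σ₁ * (mult (P.indicator S) σ₁ : R)) *
        ∑ σ₂ ∈ Δ₂, w₂ σ₂ * (mult (Pᶜ.indicator S) σ₂ : R) := by
    rw [sum_add_of_support_subset h₁ h₂, sum_mul_sum]
    refine sum_congr rfl fun σ₁ hσ₁ => sum_congr rfl fun σ₂ hσ₂ => ?_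
    rw [indicator_add_eq_left (h₁ _ hσ₁) (h₂ _ hσ₂),
      indicator_compl_add_eq_right (h₁ _ hσ₁) (h₂ _ hσ₂),
      mult_add_of_support_subset S (h₁ _ hσ₁) (h₂ _ hσ₂)]
    push_cast
    ring
  have hsplit : ∑ i, P.indicator S i + ∑ i, Pᶜ.indicator S i = ∑ i, S i := by
    rw [← sum_add_distrib]
    exact sum_congr rfl fun i _ => congrFun (Set.indicator_self_add_compl P S) i
  rw [hfactor]
  rcases (by omega : ∑ i, P.indicator S i ≤ d₁ ∨ ∑ i, Pᶜ.indicator S i ≤ d₂) with h | h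
  · rw [hw₁ _ h, zero_mul]
  · rw [hw₂ _ h, mul_zero]

theorem IsBalancing.of_add_left {w : (Fin n → ℕ) → R}
    (hw : IsBalancing (Δ₁ + Δ₂) (d₁ + d₂ + 1) w) (h₁ : ∀ σ ∈ Δ₁, σ.support ⊆ P)
    (h₂ : ∀ σ ∈ Δ₂, σ.support ⊆ Pᶜ) (hc₂ : ∀ σ ∈ Δ₂, ∑ i, σ i = d₂ + 1)
    {τ₂ : Fin n → ℕ} (hτ₂ : τ₂ ∈ Δ₂) :
    IsBalancing Δ₁ d₁ fun σ => w (σ + τ₂) := by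
  intro S hS
  by_cases hSP : S.support ⊆ P
  · have hST := hw (S + τ₂) (by simp only [Pi.add_apply, sum_add_distrib, hc₂ τ₂ hτ₂]; omega)
    rw [sum_add_of_support_subset h₁ h₂] at hST
    rw [← hST]
    refine sum_congr rfl fun σ₁ hσ₁ => ?_
    have hmult : ∀ σ₂ ∈ Δ₂, mult (S + τ₂) (σ₁ + σ₂) = mult S σ₁ * mult τ₂ σ₂ := fun σ₂ hσ₂ => by
      rw [mult_add_of_support_subset _ (h₁ _ hσ₁) (h₂ _ hσ₂), indicator_add_eq_left hSP (h₂ _ hτ₂),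
        indicator_compl_add_eq_right hSP (h₂ _ hτ₂)]
    rw [sum_eq_single_of_mem τ₂ hτ₂, hmult τ₂ hτ₂, mult_self, mul_one]
    intro σ₂ hσ₂ hne
    rw [hmult σ₂ hσ₂, mult_eq_zero_of_ne_of_sum_eq hne (by rw [hc₂ _ hσ₂, hc₂ _ hτ₂]),
      mul_zero, Nat.cast_zero, mul_zero]
  · refine sum_eq_zero fun σ₁ hσ₁ => ?_
    rw [mult_eq_zero_of_not_support_subset fun h => hSP (h.trans (h₁ σ₁ hσ₁)), Nat.cast_zero,
      mul_zero]

theorem HasNondegBalancing.of_add_left (h : HasNondegBalancing R (Δ₁ + Δ₂) (d₁ + d₂ + 1))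
    (h₁ : ∀ σ ∈ Δ₁, σ.support ⊆ P) (h₂ : ∀ σ ∈ Δ₂, σ.support ⊆ Pᶜ)
    (hc₂ : ∀ σ ∈ Δ₂, ∑ i, σ i = d₂ + 1) (hΔ₂ : Δ₂.Nonempty) : HasNondegBalancing R Δ₁ d₁ := by
  obtain ⟨w, hw0, hw⟩ := h
  obtain ⟨τ₂, hτ₂⟩ := hΔ₂
  exact ⟨_, fun σ hσ => hw0 _ (add_mem_add hσ hτ₂), hw.of_add_left h₁ h₂ hc₂ hτ₂⟩

theorem HasNondegBalancing.of_add_right (h : HasNondegBalancing R (Δ₁ + Δ₂) (d₁ + d₂ + 1))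
    (h₁ : ∀ σ ∈ Δ₁, σ.support ⊆ P) (h₂ : ∀ σ ∈ Δ₂, σ.support ⊆ Pᶜ)
    (hc₁ : ∀ σ ∈ Δ₁, ∑ i, σ i = d₁ + 1) (hΔ₁ : Δ₁.Nonempty) : HasNondegBalancing R Δ₂ d₂ := by
  rw [add_comm Δ₁, add_comm d₁] at h
  exact h.of_add_left h₂ (by simpa only [compl_compl] using h₁) hc₁ hΔ₁

theorem HasNondegBalancing.add [NoZeroDivisors R] (hΔ₁ : HasNondegBalancing R Δ₁ d₁)
    (hΔ₂ : HasNondegBalancing R Δ₂ d₂) (h₁ : ∀ σ ∈ Δ₁, σ.support ⊆ P)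
    (h₂ : ∀ σ ∈ Δ₂, σ.support ⊆ Pᶜ) : HasNondegBalancing R (Δ₁ + Δ₂) (d₁ + d₂ + 1) := by
  obtain ⟨w₁, hw₁0, hw₁⟩ := hΔ₁
  obtain ⟨w₂, hw₂0, hw₂⟩ := hΔ₂
  refine ⟨_, fun σ hσ => ?_, hw₁.add hw₂ h₁ h₂⟩
  obtain ⟨σ₁, hσ₁, σ₂, hσ₂, rfl⟩ := mem_add.1 hσ
  rw [indicator_add_eq_left (h₁ _ hσ₁) (h₂ _ hσ₂),
    indicator_compl_add_eq_right (h₁ _ hσ₁) (h₂ _ hσ₂)]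
  exact mul_ne_zero (hw₁0 _ hσ₁) (hw₂0 _ hσ₂)

theorem hasNondegBalancing_add_iff [NoZeroDivisors R] (h₁ : ∀ σ ∈ Δ₁, σ.support ⊆ P)
    (h₂ : ∀ σ ∈ Δ₂, σ.support ⊆ Pᶜ) (hc₁ : ∀ σ ∈ Δ₁, ∑ i, σ i = d₁ + 1)
    (hc₂ : ∀ σ ∈ Δ₂, ∑ i, σ i = d₂ + 1) (hΔ : (Δ₁ + Δ₂).Nonempty) :
    HasNondegBalancing R (Δ₁ + Δ₂) (d₁ + d₂ + 1) ↔
      HasNondegBalancing R Δ₁ d₁ ∧ HasNondegBalancing R Δ₂ d₂ := by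
  obtain ⟨hΔ₁, hΔ₂⟩ := add_nonempty.1 hΔ
  exact ⟨fun h => ⟨h.of_add_left h₁ h₂ hc₂ hΔ₂, h.of_add_right h₁ h₂ hc₁ hΔ₁⟩,
    fun h => h.1.add h.2 h₁ h₂⟩

end Balancing

/-- Let `R` be an integral domain and `Δ = Δ₁·Δ₂` a nonempty nonsingular product
complex, where `Δ₁` is a `d₁`-complex and `Δ₂` a `d₂`-complex. Then `Δ` admits a
nondegenerate `R`-balancing if and only if both `Δ₁` and `Δ₂` do. -/
theorem product_nondegenerate_balancing_iff (R : Type*) [CommRing R] [IsDomain R]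
    {n d₁ d₂ : ℕ} (Δ₁ Δ₂ : Finset (Fin n → ℕ))
    (hc₁ : ∀ σ ∈ Δ₁, ∑ i, σ i = d₁ + 1) (hc₂ : ∀ σ ∈ Δ₂, ∑ i, σ i = d₂ + 1)
    (hne : ((Δ₁ ×ˢ Δ₂).image (fun p => p.1 + p.2)).Nonempty)
    (hns : ∀ σ ∈ (Δ₁ ×ˢ Δ₂).image (fun p => p.1 + p.2), ∀ i, σ i ≤ 1) :
    (∃ w : (Fin n → ℕ) → R,
        (∀ σ ∈ (Δ₁ ×ˢ Δ₂).image (fun p => p.1 + p.2), w σ ≠ 0) ∧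
        ∀ S : Fin n → ℕ, ∑ i, S i ≤ d₁ + d₂ + 1 →
          ∑ σ ∈ (Δ₁ ×ˢ Δ₂).image (fun p => p.1 + p.2), w σ * (mult S σ : R) = 0)
      ↔ ((∃ w₁ : (Fin n → ℕ) → R, (∀ σ ∈ Δ₁, w₁ σ ≠ 0) ∧
            ∀ S : Fin n → ℕ, ∑ i, S i ≤ d₁ →
              ∑ σ ∈ Δ₁, w₁ σ * (mult S σ : R) = 0) ∧
         (∃ w₂ : (Fin n → ℕ) → R, (∀ σ ∈ Δ₂, w₂ σ ≠ 0) ∧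
            ∀ S : Fin n → ℕ, ∑ i, S i ≤ d₂ →
              ∑ σ ∈ Δ₂, w₂ σ * (mult S σ : R) = 0)) := by
  rw [image_add_product] at hne hns
  let P : Set (Fin n) := {i | ∃ σ ∈ Δ₁, σ i ≠ 0}
  have h₁ : ∀ σ ∈ Δ₁, σ.support ⊆ P := fun σ hσ _ hi => ⟨σ, hσ, hi⟩
  have h₂ : ∀ σ ∈ Δ₂, σ.support ⊆ Pᶜ := by
    rintro σ₂ hσ₂ i (hi : σ₂ i ≠ 0) ⟨σ₁, hσ₁, hi₁⟩
    have := hns _ (add_mem_add hσ₁ hσ₂) i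
    rw [Pi.add_apply] at this
    omega
  exact hasNondegBalancing_add_iff h₁ h₂ hc₁ hc₂ hne
end

section
/- Let K be a field of characteristic zero, d ≥ 1 and n ≤ 2d+1. Then the only balancing of the complete nonsingular d-complex Δ^{ns}_{n,d} (the set of all (d+1)-element subsets of {1,…,n}) over K is the identically zero weighting. Equivalently, there are no nonempty nonsingular balanceable d-complexes on n vertices when d+1 > n/2. -/
open scoped BigOperators

/-- The multiplicity `m(S ⊆ σ)` of a multiset `S` on `{1,…,n}` in a *set* `σ` of
vertices: `∏ i, C([i ∈ σ], S i)`, which is `1` if `S` is a subset of `σ` (each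
multiplicity at most one) and `0` otherwise. -/
def multS {n : ℕ} (S : Fin n → ℕ) (σ : Finset (Fin n)) : ℕ :=
  ∏ i, (if i ∈ σ then 1 else 0).choose (S i)

lemma multS_indicator {n : ℕ} (τ σ : Finset (Fin n)) :
    multS (fun i => if i ∈ τ then 1 else 0) σ = if τ ⊆ σ then 1 else 0 := by
  unfold multS
  by_cases h : τ ⊆ σ
  · simp only [h, if_true]
    apply Finset.prod_eq_one
    intro i _
    by_cases hi : i ∈ τ
    · simp [hi, h hi]
    · simp [hi]
  · simp only [h, if_false]
    obtain ⟨i, hiτ, hiσ⟩ := Finset.not_subset.mp h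
    apply Finset.prod_eq_zero (Finset.mem_univ i)
    simp [hiτ, hiσ]

lemma sum_powerset_neg_one_pow_card_K {K : Type*} [Field K] {α : Type*} [DecidableEq α]
    {A : Finset α} (hA : A.Nonempty) :
    ∑ τ ∈ A.powerset, (-1:K)^τ.card = 0 := by
  have h := Finset.sum_powerset_neg_one_pow_card_of_nonempty hA
  have h2 : ((∑ m ∈ A.powerset, (-1:ℤ)^m.card : ℤ) : K) = 0 := by rw [h]; simp
  push_cast at h2
  exact h2

/-- Over a characteristic-zero field, if `d ≥ 1` and `n ≤ 2d+1` (i.e. `d+1 > n/2`),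
then the only balancing of the complete nonsingular `d`-complex `Δ^{ns}_{n,d}` (all
`(d+1)`-element subsets of `{1,…,n}`) is identically zero. Equivalently, there are no
nonempty nonsingular balanceable `d`-complexes on `n` vertices when `d+1 > n/2`. -/
theorem complete_nonsingular_no_balancing (K : Type*) [Field K] [CharZero K]
    (n d : ℕ) (hd : 1 ≤ d) (hn : n ≤ 2 * d + 1) (w : Finset (Fin n) → K)
    (hbal : ∀ S : Fin n → ℕ, ∑ i, S i ≤ d →
      ∑ σ ∈ Finset.univ.filter (fun σ : Finset (Fin n) => σ.card = d + 1),
        w σ * (multS S σ : K) = 0) :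
    ∀ σ : Finset (Fin n), σ.card = d + 1 → w σ = 0 := by
  intro σ hσ
  set F : Finset (Finset (Fin n)) :=
    Finset.univ.filter (fun σ' : Finset (Fin n) => σ'.card = d + 1) with hF
  have key : ∀ τ : Finset (Fin n), τ.card ≤ d →
      ∑ σ' ∈ F, w σ' * (if τ ⊆ σ' then (1:K) else 0) = 0 := by
    intro τ hτ
    have hsum : ∑ i, (if i ∈ τ then 1 else 0) = τ.card := by
      simp [Finset.sum_ite_mem]
    have h := hbal (fun i => if i ∈ τ then 1 else 0) (by rw [hsum]; exact hτ)
    have hrw : ∑ σ' ∈ F, w σ' * ((multS (fun i => if i ∈ τ then 1 else 0) σ' : ℕ) : K)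
        = ∑ σ' ∈ F, w σ' * (if τ ⊆ σ' then (1:K) else 0) := by
      apply Finset.sum_congr rfl
      intro σ' _
      rw [multS_indicator]
      simp only [Nat.cast_ite, Nat.cast_one, Nat.cast_zero]
    rw [← hrw]
    exact h
  -- the inclusion-exclusion sum
  have h0 : ∑ τ ∈ σ.powerset.filter (fun τ => τ.card ≤ d),
      (-1:K)^τ.card * ∑ σ' ∈ F, w σ' * (if τ ⊆ σ' then (1:K) else 0) = 0 := by
    apply Finset.sum_eq_zero
    intro τ hτ
    rw [Finset.mem_filter] at hτ
    rw [key τ hτ.2, mul_zero]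
  have hswap : ∑ τ ∈ σ.powerset.filter (fun τ => τ.card ≤ d),
      (-1:K)^τ.card * ∑ σ' ∈ F, w σ' * (if τ ⊆ σ' then (1:K) else 0)
      = ∑ σ' ∈ F, w σ' * ∑ τ ∈ σ.powerset.filter (fun τ => τ.card ≤ d),
          (-1:K)^τ.card * (if τ ⊆ σ' then (1:K) else 0) := by
    simp_rw [Finset.mul_sum]
    rw [Finset.sum_comm]
    apply Finset.sum_congr rfl
    intro σ' _
    apply Finset.sum_congr rfl
    intro τ _
    ring
  -- compute the inner sum
  have hinner : ∀ σ' ∈ F,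
      (∑ τ ∈ σ.powerset.filter (fun τ => τ.card ≤ d),
        (-1:K)^τ.card * (if τ ⊆ σ' then (1:K) else 0))
      = if σ' = σ then (-1:K)^d else 0 := by
    intro σ' hσ'
    rw [hF, Finset.mem_filter] at hσ'
    have hcard' : σ'.card = d + 1 := hσ'.2
    have hrestrict : ∑ τ ∈ σ.powerset.filter (fun τ => τ.card ≤ d),
        (-1:K)^τ.card * (if τ ⊆ σ' then (1:K) else 0)
        = ∑ τ ∈ (σ ∩ σ').powerset.filter (fun τ => τ.card ≤ d), (-1:K)^τ.card := by
      simp_rw [mul_ite, mul_one, mul_zero]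
      rw [← Finset.sum_filter]
      have heqf : (σ.powerset.filter (fun τ => τ.card ≤ d)).filter (fun τ => τ ⊆ σ')
          = (σ ∩ σ').powerset.filter (fun τ => τ.card ≤ d) := by
        ext τ
        simp only [Finset.mem_filter, Finset.mem_powerset, Finset.subset_inter_iff]
        tauto
      rw [heqf]
    rw [hrestrict]
    have hinter : 1 ≤ (σ ∩ σ').card := by
      have h1 := Finset.card_inter_add_card_union σ σ'
      have h2 : (σ ∪ σ').card ≤ n := by
        calc (σ ∪ σ').card ≤ (Finset.univ : Finset (Fin n)).card :=
              Finset.card_le_card (Finset.subset_univ _)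
          _ = n := by simp
      omega
    by_cases heq : σ' = σ
    · subst heq
      simp only [Finset.inter_self, if_pos rfl]
      have hfilter : σ'.powerset.filter (fun τ => τ.card ≤ d) = σ'.powerset.erase σ' := by
        ext τ
        simp only [Finset.mem_filter, Finset.mem_powerset, Finset.mem_erase]
        constructor
        · rintro ⟨h1, h2⟩
          refine ⟨?_, h1⟩
          rintro rfl
          omega
        · rintro ⟨h1, h2⟩
          refine ⟨h2, ?_⟩
          have hle : τ.card ≤ σ'.card := Finset.card_le_card h2
          have hne : τ.card ≠ σ'.card :=
            fun hc => h1 (Finset.eq_of_subset_of_card_le h2 hc.ge)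
          omega
      have hmem : σ' ∈ σ'.powerset := Finset.mem_powerset_self σ'
      have hne : σ'.Nonempty := Finset.card_pos.mp (by omega)
      have hsplit : ∑ τ ∈ σ'.powerset.erase σ', (-1:K)^τ.card
          = (∑ τ ∈ σ'.powerset, (-1:K)^τ.card) - (-1:K)^σ'.card := by
        rw [← Finset.sum_erase_add σ'.powerset _ hmem]
        ring
      rw [hfilter, hsplit, sum_powerset_neg_one_pow_card_K hne, hcard', pow_succ]
      norm_num
    · simp only [heq, if_false]
      have hssub : (σ ∩ σ').card ≤ d := by
        have hsub : σ ∩ σ' ⊆ σ := Finset.inter_subset_left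
        have hle : (σ ∩ σ').card ≤ σ.card := Finset.card_le_card hsub
        rw [hσ] at hle
        rcases eq_or_lt_of_le hle with h | h
        · exfalso
          have hinteq : σ ∩ σ' = σ :=
            Finset.eq_of_subset_of_card_le hsub (by omega)
          have hsub2 : σ ⊆ σ' := by
            rw [← hinteq]; exact Finset.inter_subset_right
          exact heq (Finset.eq_of_subset_of_card_le hsub2
            (le_of_eq (hcard'.trans hσ.symm))).symm
        · omega
      have hfilter : (σ ∩ σ').powerset.filter (fun τ => τ.card ≤ d)
          = (σ ∩ σ').powerset := by
        apply Finset.filter_true_of_mem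
        intro τ hτ
        rw [Finset.mem_powerset] at hτ
        exact le_trans (Finset.card_le_card hτ) hssub
      rw [hfilter]
      exact sum_powerset_neg_one_pow_card_K (Finset.card_pos.mp hinter)
  rw [hswap] at h0
  have hfinal : ∑ σ' ∈ F, w σ' * (if σ' = σ then (-1:K)^d else 0) = 0 := by
    have hrw : ∑ σ' ∈ F, w σ' * ∑ τ ∈ σ.powerset.filter (fun τ => τ.card ≤ d),
          (-1:K)^τ.card * (if τ ⊆ σ' then (1:K) else 0)
        = ∑ σ' ∈ F, w σ' * (if σ' = σ then (-1:K)^d else 0) := by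
      apply Finset.sum_congr rfl
      intro σ' h
      rw [hinner σ' h]
    rw [hrw] at h0
    exact h0
  have hσF : σ ∈ F := by rw [hF, Finset.mem_filter]; exact ⟨Finset.mem_univ _, hσ⟩
  rw [Finset.sum_eq_single σ (fun b _ hb => by simp [hb])
    (fun h => absurd hσF h)] at hfinal
  simp only [if_pos rfl] at hfinal
  have hne : (-1:K)^d ≠ 0 := pow_ne_zero _ (by norm_num)
  exact (mul_eq_zero.mp hfinal).resolve_right hne
end

section
/- Let K be a field of characteristic zero and n ≥ 2d+1 with d ≥ 0. The K-vector space of balancings of the complete nonsingular d-complex Δ^{ns}_{n,d} on n vertices has dimension C(n, d+1) − C(n, d). -/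
open scoped BigOperators

/-- The `K`-vector space of balancings of the complete nonsingular `d`-complex
`Δ^{ns}_{n,d}` (the set of all `(d+1)`-element subsets of `{1,…,n}`): weightings
supported on the `(d+1)`-subsets and satisfying the balancing condition for every
multiset `S` of cardinality `≤ d`. -/
noncomputable def nsBalancingSpace (K : Type*) [Field K] (n d : ℕ) :
    Submodule K (Finset (Fin n) → K) :=
  (⨅ σ : {σ : Finset (Fin n) // σ.card ≠ d + 1},
      LinearMap.ker (LinearMap.proj σ.1 : (Finset (Fin n) → K) →ₗ[K] K)) ⊓
  (⨅ S : {S : Fin n → ℕ // ∑ i, S i ≤ d},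
      LinearMap.ker
        (∑ σ ∈ Finset.univ.filter (fun σ : Finset (Fin n) => σ.card = d + 1),
          (multS S.1 σ : K) • (LinearMap.proj σ : (Finset (Fin n) → K) →ₗ[K] K)))

namespace NSBalAux

open Finset Matrix

variable (K : Type*) [Field K] (n : ℕ)

/-- The "up" operator on functions on subsets of `Fin n`. -/
noncomputable def upE : Module.End K (Finset (Fin n) → K) where
  toFun f := fun σ => ∑ x ∈ σ, f (σ.erase x)
  map_add' f g := by funext σ; simp [Finset.sum_add_distrib]
  map_smul' c f := by funext σ; simp [Finset.mul_sum]

/-- The "down" operator on functions on subsets of `Fin n`. -/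
noncomputable def downE : Module.End K (Finset (Fin n) → K) where
  toFun f := fun τ => ∑ x ∈ τᶜ, f (insert x τ)
  map_add' f g := by funext τ; simp [Finset.sum_add_distrib]
  map_smul' c f := by funext τ; simp [Finset.mul_sum]

variable {K n}

lemma upE_apply (f : Finset (Fin n) → K) (σ : Finset (Fin n)) :
    upE K n f σ = ∑ x ∈ σ, f (σ.erase x) := rfl

lemma downE_apply (f : Finset (Fin n) → K) (τ : Finset (Fin n)) :
    downE K n f τ = ∑ x ∈ τᶜ, f (insert x τ) := rfl

/-- `f` is supported on sets of cardinality `t`. -/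
def IsDeg (t : ℕ) (f : Finset (Fin n) → K) : Prop :=
  ∀ τ : Finset (Fin n), τ.card ≠ t → f τ = 0

lemma isDeg_up {t : ℕ} {f : Finset (Fin n) → K} (hf : IsDeg t f) :
    IsDeg (t + 1) (upE K n f) := by
  intro σ hσ
  rw [upE_apply]
  refine Finset.sum_eq_zero fun x hx => hf _ ?_
  rw [Finset.card_erase_of_mem hx]
  have : 1 ≤ σ.card := Finset.card_pos.2 ⟨x, hx⟩
  omega

lemma isDeg_down {t : ℕ} {f : Finset (Fin n) → K} (hf : IsDeg (t + 1) f) :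
    IsDeg t (downE K n f) := by
  intro τ hτ
  rw [downE_apply]
  refine Finset.sum_eq_zero fun x hx => hf _ ?_
  rw [Finset.card_insert_of_notMem (by simpa using hx)]
  omega

lemma isDeg_smul {t : ℕ} {f : Finset (Fin n) → K} (hf : IsDeg t f) (c : K) :
    IsDeg t (c • f) := fun τ hτ => by simp [hf τ hτ]

lemma pow_succ_apply (m : ℕ) (f : Finset (Fin n) → K) :
    (upE K n ^ (m + 1)) f = upE K n ((upE K n ^ m) f) := by
  rw [pow_succ']; rfl

lemma isDeg_pow {t : ℕ} {f : Finset (Fin n) → K} (hf : IsDeg t f) (m : ℕ) :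
    IsDeg (t + m) ((upE K n ^ m) f) := by
  induction m with
  | zero => simpa using hf
  | succ m ih =>
      rw [pow_succ_apply]
      simpa [← add_assoc] using isDeg_up ih

/-- The fundamental commutator identity, pointwise. -/
lemma comm_apply (f : Finset (Fin n) → K) (τ : Finset (Fin n)) :
    downE K n (upE K n f) τ =
      upE K n (downE K n f) τ + ((n : K) - 2 * τ.card) * f τ := by
  have hcard : (τᶜ.card : K) = (n : K) - τ.card := by
    rw [Finset.card_compl, Fintype.card_fin]
    have : τ.card ≤ n := by simpa using Finset.card_le_univ τ
    push_cast [Nat.cast_sub this]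
    ring
  have hL : downE K n (upE K n f) τ =
      τᶜ.card • f τ + ∑ x ∈ τᶜ, ∑ y ∈ τ, f (insert x (τ.erase y)) := by
    rw [downE_apply]
    have : ∀ x ∈ τᶜ, upE K n f (insert x τ) =
        f τ + ∑ y ∈ τ, f (insert x (τ.erase y)) := by
      intro x hx
      have hx' : x ∉ τ := by simpa using hx
      rw [upE_apply, Finset.sum_insert hx', Finset.erase_insert hx']
      congr 1
      refine Finset.sum_congr rfl fun y hy => ?_
      have hxy : x ≠ y := fun h => hx' (h ▸ hy)
      rw [Finset.erase_insert_of_ne hxy]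
    rw [Finset.sum_congr rfl this, Finset.sum_add_distrib, Finset.sum_const]
  have hR : upE K n (downE K n f) τ =
      τ.card • f τ + ∑ y ∈ τ, ∑ x ∈ τᶜ, f (insert x (τ.erase y)) := by
    rw [upE_apply]
    have : ∀ y ∈ τ, downE K n f (τ.erase y) =
        f τ + ∑ x ∈ τᶜ, f (insert x (τ.erase y)) := by
      intro y hy
      rw [downE_apply, Finset.compl_erase,
        Finset.sum_insert (by simpa using hy), Finset.insert_erase hy]
    rw [Finset.sum_congr rfl this, Finset.sum_add_distrib, Finset.sum_const]
  rw [hL, hR, Finset.sum_comm]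
  rw [nsmul_eq_mul, nsmul_eq_mul, hcard]
  ring

/-- The commutator identity for homogeneous `f`. -/
lemma comm_pow {t : ℕ} {f : Finset (Fin n) → K} (hf : IsDeg t f) (m : ℕ) :
    downE K n ((upE K n ^ (m + 1)) f) =
      (upE K n ^ (m + 1)) (downE K n f) +
        (((m : K) + 1) * ((n : K) - 2 * t - m)) • (upE K n ^ m) f := by
  induction m with
  | zero =>
      funext τ
      rw [pow_succ_apply, pow_succ_apply]
      simp only [pow_zero, Module.End.one_apply, Pi.add_apply, Pi.smul_apply, smul_eq_mul]
      rw [comm_apply]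
      by_cases h : f τ = 0
      · simp [h]
      · have : τ.card = t := by_contra fun hne => h (hf τ hne)
        rw [this]; push_cast; ring
  | succ m ih =>
      have hdeg : IsDeg (t + (m + 1)) ((upE K n ^ (m + 1)) f) := isDeg_pow hf (m + 1)
      have step : downE K n (upE K n ((upE K n ^ (m + 1)) f)) =
          upE K n (downE K n ((upE K n ^ (m + 1)) f)) +
            ((n : K) - 2 * ((t : K) + (m + 1))) • (upE K n ^ (m + 1)) f := by
        funext τ
        simp only [Pi.add_apply, Pi.smul_apply, smul_eq_mul]
        rw [comm_apply]
        by_cases h : (upE K n ^ (m + 1)) f τ = 0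
        · simp [h]
        · have : τ.card = t + (m + 1) := by_contra fun hne => h (hdeg τ hne)
          rw [this]; push_cast; ring
      rw [pow_succ_apply, step, ih]
      rw [map_add, _root_.map_smul]
      rw [← pow_succ_apply, ← pow_succ_apply, add_assoc, ← add_smul]
      congr 2
      push_cast
      ring

lemma pow_up_deg0 {g : Finset (Fin n) → K} (hg : IsDeg 0 g) (m : ℕ) :
    ∀ σ : Finset (Fin n), σ.card = m → (upE K n ^ m) g σ = (m.factorial : K) * g ∅ := by
  induction m with
  | zero =>
      intro σ hσ
      rw [Finset.card_eq_zero] at hσ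
      subst hσ
      simp
  | succ m ih =>
      intro σ hσ
      rw [pow_succ_apply, upE_apply]
      have : ∀ x ∈ σ, (upE K n ^ m) g (σ.erase x) = (m.factorial : K) * g ∅ := by
        intro x hx
        exact ih _ (by rw [Finset.card_erase_of_mem hx, hσ]; rfl)
      rw [Finset.sum_congr rfl this, Finset.sum_const, hσ, nsmul_eq_mul]
      push_cast [Nat.factorial_succ]
      ring

/-- Injectivity of the up operator on degree-`k` functions for `n ≥ 2k+1`. -/
theorem up_inj [CharZero K] {k : ℕ} (hk : 2 * k + 1 ≤ n) {f : Finset (Fin n) → K}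
    (hf : IsDeg k f) (h0 : upE K n f = 0) : f = 0 := by
  have claim : ∀ j, j ≤ k → ∃ g : Finset (Fin n) → K,
      IsDeg (k - j) g ∧ f = (upE K n ^ j) g := by
    intro j
    induction j with
    | zero => exact fun _ => ⟨f, by simpa using hf, by simp⟩
    | succ j ih =>
        intro hj
        obtain ⟨g, hg, hfg⟩ := ih (by omega)
        have hUg : (upE K n ^ (j + 1)) g = 0 := by
          rw [pow_succ_apply, ← hfg, h0]
        have hg' : IsDeg ((k - (j + 1)) + 1) g := by
          have : (k - (j + 1)) + 1 = k - j := by omega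
          rw [this]; exact hg
        have hcomm := comm_pow hg j
        rw [hUg, map_zero] at hcomm
        set c : K := ((j : K) + 1) * ((n : K) - 2 * (k - j : ℕ) - j) with hc
        have hcval : ((n : K) - 2 * (k - j : ℕ) - j) = ((n + j - 2 * k : ℕ) : K) := by
          have h1 : ((k - j : ℕ) : K) = (k : K) - j := by
            push_cast [Nat.cast_sub (by omega : j ≤ k)]; ring
          have h2 : ((n + j - 2 * k : ℕ) : K) = (n : K) + j - 2 * k := by
            push_cast [Nat.cast_sub (by omega : 2 * k ≤ n + j)]; ring
          rw [h1, h2]; ring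
        have hcne : c ≠ 0 := by
          rw [hc, hcval]
          refine mul_ne_zero ?_ ?_
          · exact Nat.cast_add_one_ne_zero j
          · exact_mod_cast Nat.cast_ne_zero.2 (by omega : n + j - 2 * k ≠ 0)
        -- 0 = U^{j+1} (D g) + c • U^j g
        have key : (upE K n ^ j) g = (upE K n ^ (j + 1)) ((-c⁻¹) • downE K n g) := by
          rw [_root_.map_smul]
          have : (upE K n ^ (j + 1)) (downE K n g) = -(c • (upE K n ^ j) g) := by
            have := hcomm.symm
            linear_combination (norm := module) this
          rw [this, smul_neg, neg_smul, neg_neg, smul_smul, inv_mul_cancel₀ hcne, one_smul]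
        refine ⟨(-c⁻¹) • downE K n g, ?_, ?_⟩
        · exact isDeg_smul (isDeg_down hg') _
        · rw [hfg, key]
  obtain ⟨g, hg0, hfg⟩ := claim k le_rfl
  rw [Nat.sub_self] at hg0
  have hUg : (upE K n ^ (k + 1)) g = 0 := by
    rw [pow_succ_apply, ← hfg, h0]
  obtain ⟨σ, -, hσ⟩ := Finset.exists_subset_card_eq
    (show k + 1 ≤ (Finset.univ : Finset (Fin n)).card by simpa using (by omega : k + 1 ≤ n))
  have hval := pow_up_deg0 hg0 (k + 1) σ hσ
  rw [hUg] at hval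
  have hfac : ((k + 1).factorial : K) ≠ 0 :=
    Nat.cast_ne_zero.2 (Nat.factorial_ne_zero _)
  have hgempty : g ∅ = 0 := by
    have := hval.symm
    simp only [Pi.zero_apply] at this
    exact (mul_eq_zero.1 this).resolve_left hfac
  have : g = 0 := by
    funext τ
    by_cases h : τ.card = 0
    · rw [Finset.card_eq_zero] at h; subst h; simpa using hgempty
    · exact hg0 τ h
  rw [hfg, this, map_zero]


section Balancing

variable {K : Type*} [Field K] {n d : ℕ}

lemma multS_eq_zero {S : Fin n → ℕ} {i : Fin n} (hi : 2 ≤ S i) (σ : Finset (Fin n)) :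
    multS S σ = 0 := by
  refine Finset.prod_eq_zero (Finset.mem_univ i) ?_
  apply Nat.choose_eq_zero_of_lt
  split <;> omega

lemma multS_of_le_one {S : Fin n → ℕ} (hS : ∀ i, S i ≤ 1) (σ : Finset (Fin n)) :
    multS S σ = if Finset.univ.filter (fun i => S i = 1) ⊆ σ then 1 else 0 := by
  by_cases hT : Finset.univ.filter (fun i => S i = 1) ⊆ σ
  · rw [if_pos hT]
    refine Finset.prod_eq_one fun i _ => ?_
    rcases Nat.le_one_iff_eq_zero_or_eq_one.mp (hS i) with h | h
    · simp [h]
    · have hiσ : i ∈ σ := hT (by simp [h])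
      simp [h, hiσ]
  · rw [if_neg hT]
    obtain ⟨i, hiT, hiσ⟩ := Finset.not_subset.mp hT
    refine Finset.prod_eq_zero (Finset.mem_univ i) ?_
    have hSi : S i = 1 := (Finset.mem_filter.mp hiT).2
    simp [hSi, hiσ]

lemma filter_indicator (τ : Finset (Fin n)) :
    Finset.univ.filter (fun i => (if i ∈ τ then 1 else 0 : ℕ) = 1) = τ := by
  ext i
  by_cases h : i ∈ τ <;> simp [h]

lemma multS_indicator (τ σ : Finset (Fin n)) :
    multS (fun i => if i ∈ τ then 1 else 0) σ = if τ ⊆ σ then 1 else 0 := by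
  rw [multS_of_le_one (fun i => by by_cases h : i ∈ τ <;> simp [h]), filter_indicator]

lemma sum_indicator (τ : Finset (Fin n)) :
    ∑ i, (if i ∈ τ then 1 else 0 : ℕ) = τ.card := by
  simp [Finset.sum_ite_mem]

lemma mem_nsBal (w : Finset (Fin n) → K) :
    w ∈ nsBalancingSpace K n d ↔
      (∀ σ : Finset (Fin n), σ.card ≠ d + 1 → w σ = 0) ∧
      ∀ S : Fin n → ℕ, (∑ i, S i) ≤ d →
        ∑ σ ∈ Finset.univ.filter (fun σ : Finset (Fin n) => σ.card = d + 1),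
          (multS S σ : K) * w σ = 0 := by
  simp only [nsBalancingSpace, Submodule.mem_inf, Submodule.mem_iInf, LinearMap.mem_ker,
    LinearMap.proj_apply, Subtype.forall, LinearMap.coe_sum, Finset.sum_apply,
    LinearMap.smul_apply, smul_eq_mul]

/-- The balancing functional attached to a set `τ`. -/
def Lfun (d : ℕ) (τ : Finset (Fin n)) (w : Finset (Fin n) → K) : K :=
  ∑ σ ∈ Finset.univ.filter (fun σ : Finset (Fin n) => σ.card = d + 1),
    if τ ⊆ σ then w σ else 0

lemma Lfun_zero [CharZero K] (w : Finset (Fin n) → K)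
    (hker : ∀ τ : Finset (Fin n), τ.card = d → Lfun d τ w = 0) :
    ∀ (m : ℕ) (τ : Finset (Fin n)), τ.card + m = d → Lfun d τ w = 0 := by
  intro m
  induction m with
  | zero => exact fun τ hτ => hker τ (by omega)
  | succ m ih =>
      intro τ hτ
      have hsum : ∑ x ∈ τᶜ, Lfun d (insert x τ) w = 0 := by
        refine Finset.sum_eq_zero fun x hx => ih _ ?_
        rw [Finset.card_insert_of_notMem (by simpa using hx)]; omega
      have hswap : ∑ x ∈ τᶜ, Lfun d (insert x τ) w
          = ((d + 1 - τ.card : ℕ) : K) * Lfun d τ w := by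
        unfold Lfun
        rw [Finset.sum_comm, Finset.mul_sum]
        refine Finset.sum_congr rfl fun σ hσ => ?_
        have hσcard : σ.card = d + 1 := (Finset.mem_filter.mp hσ).2
        by_cases hτσ : τ ⊆ σ
        · have h1 : ∀ x ∈ τᶜ, (if insert x τ ⊆ σ then w σ else 0)
              = if x ∈ σ then w σ else 0 := by
            intro x _
            simp [Finset.insert_subset_iff, hτσ]
          rw [Finset.sum_congr rfl h1, Finset.sum_ite_mem, Finset.sum_const]
          have hc : (τᶜ ∩ σ).card = d + 1 - τ.card := by
            have he : τᶜ ∩ σ = σ \ τ := by ext a; simp [Finset.mem_sdiff, and_comm]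
            rw [he, Finset.card_sdiff_of_subset hτσ, hσcard]
          rw [hc, nsmul_eq_mul, if_pos hτσ]
        · have h1 : ∀ x ∈ τᶜ, (if insert x τ ⊆ σ then w σ else 0) = 0 := by
            intro x _
            simp [Finset.insert_subset_iff, hτσ]
          rw [Finset.sum_eq_zero h1, if_neg hτσ, mul_zero]
      have hne : ((d + 1 - τ.card : ℕ) : K) ≠ 0 := Nat.cast_ne_zero.2 (by omega)
      exact (mul_eq_zero.mp (hswap.symm.trans hsum)).resolve_left hne

variable (K n d) in
/-- The inclusion matrix between `d`-subsets and `(d+1)`-subsets. -/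
def incMat : Matrix {τ : Finset (Fin n) // τ.card = d}
    {σ : Finset (Fin n) // σ.card = d + 1} K :=
  fun τ σ => if τ.1 ⊆ σ.1 then 1 else 0

lemma sum_subtype_filter (g : Finset (Fin n) → K) :
    ∑ σ' : {σ : Finset (Fin n) // σ.card = d + 1}, g σ'.1
      = ∑ σ ∈ Finset.univ.filter (fun σ : Finset (Fin n) => σ.card = d + 1), g σ :=
  (Finset.sum_subtype _ (fun x => by simp) g).symm

lemma incMat_transpose_inj [CharZero K] (hn : 2 * d + 1 ≤ n) :
    Function.Injective (incMat K n d)ᵀ.mulVecLin := by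
  rw [← LinearMap.ker_eq_bot, LinearMap.ker_eq_bot']
  intro v hv
  set f : Finset (Fin n) → K := fun τ => if h : τ.card = d then v ⟨τ, h⟩ else 0 with hfdef
  have hdeg : IsDeg d f := fun τ hτ => dif_neg hτ
  have hup : upE K n f = 0 := by
    funext σ
    show upE K n f σ = 0
    by_cases hσ : σ.card = d + 1
    · have hv' := congrFun hv ⟨σ, hσ⟩
      have hv'' : ∑ τ' : {τ : Finset (Fin n) // τ.card = d},
          (if τ'.1 ⊆ σ then v τ' else 0) = 0 := by
        simpa [Matrix.mulVecLin_apply, Matrix.vecMul, Matrix.mulVec, dotProduct, incMat,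
          Matrix.transpose_apply, mul_ite, ite_mul, mul_one, one_mul, mul_zero, zero_mul]
          using hv'
      have key : upE K n f σ = ∑ τ' ∈ Finset.univ.filter
          (fun τ' : {τ : Finset (Fin n) // τ.card = d} => τ'.1 ⊆ σ), v τ' := by
        rw [upE_apply]
        refine Finset.sum_bij
          (fun x hx => (⟨σ.erase x, by rw [Finset.card_erase_of_mem hx, hσ]; omega⟩ :
            {τ : Finset (Fin n) // τ.card = d}))
          (fun x hx => Finset.mem_filter.mpr ⟨Finset.mem_univ _, Finset.erase_subset _ _⟩)
          ?_ ?_ ?_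
        · intro x hx y hy hxy
          have : σ.erase x = σ.erase y := congrArg (Subtype.val) hxy
          exact (Finset.erase_inj σ hx).mp this
        · intro τ' hτ'
          have hsub : τ'.1 ⊆ σ := (Finset.mem_filter.mp hτ').2
          have hcard1 : (σ \ τ'.1).card = 1 := by
            rw [Finset.card_sdiff_of_subset hsub, hσ, τ'.2]; omega
          obtain ⟨x, hx⟩ := Finset.card_eq_one.mp hcard1
          have hxmem : x ∈ σ \ τ'.1 := hx ▸ Finset.mem_singleton_self x
          have hxσ : x ∈ σ := (Finset.mem_sdiff.mp hxmem).1
          have hxτ : x ∉ τ'.1 := (Finset.mem_sdiff.mp hxmem).2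
          refine ⟨x, hxσ, ?_⟩
          apply Subtype.ext
          have hsub2 : τ'.1 ⊆ σ.erase x := Finset.subset_erase.mpr ⟨hsub, hxτ⟩
          have : (σ.erase x).card = τ'.1.card := by
            rw [Finset.card_erase_of_mem hxσ, hσ, τ'.2]; omega
          exact (Finset.eq_of_subset_of_card_le hsub2 (le_of_eq this)).symm
        · intro x hx
          exact dif_pos (by rw [Finset.card_erase_of_mem hx, hσ]; omega)
      rw [key, Finset.sum_filter, hv'']
    · exact isDeg_up hdeg σ (by omega)
  have hf0 : f = 0 := up_inj hn hdeg hup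
  funext τ'
  have : f τ'.1 = v τ' := dif_pos τ'.2
  rw [hf0] at this
  exact this.symm

lemma card_subtype_card (k : ℕ) :
    Fintype.card {σ : Finset (Fin n) // σ.card = k} = n.choose k := by
  rw [Fintype.card_subtype]
  have h : Finset.univ.filter (fun σ : Finset (Fin n) => σ.card = k)
      = Finset.powersetCard k Finset.univ := by
    ext σ; simp [Finset.mem_powersetCard]
  rw [h, Finset.card_powersetCard, Finset.card_univ, Fintype.card_fin]

end Balancing

end NSBalAux

set_option maxHeartbeats 1000000 in
/-- Over a characteristic-zero field `K`, for `n ≥ 2d+1` the `K`-vector space of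
balancings of the complete nonsingular `d`-complex `Δ^{ns}_{n,d}` on `n` vertices has
dimension `C(n, d+1) − C(n, d)`. -/
theorem nonsingular_balancings_dimension (K : Type*) [Field K] [CharZero K]
    (n d : ℕ) (hn : 2 * d + 1 ≤ n) :
    Module.finrank K (nsBalancingSpace K n d) = n.choose (d + 1) - n.choose d := by
  set M := NSBalAux.incMat K n d with hM
  have hinj : Function.Injective M.transpose.mulVecLin :=
    NSBalAux.incMat_transpose_inj hn
  have hrankT : M.transpose.rank = n.choose d := by
    have h1 : M.transpose.rank
        = Module.finrank K (LinearMap.range M.transpose.mulVecLin) := rfl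
    rw [h1, LinearMap.finrank_range_of_inj hinj, Module.finrank_pi]
    exact NSBalAux.card_subtype_card d
  have hrank : M.rank = n.choose d := by
    rw [← Matrix.rank_transpose]; exact hrankT
  have hrn := LinearMap.finrank_range_add_finrank_ker M.mulVecLin
  have hdom : Module.finrank K ({σ : Finset (Fin n) // σ.card = d + 1} → K)
      = n.choose (d + 1) := by
    rw [Module.finrank_pi]; exact NSBalAux.card_subtype_card (d + 1)
  have hker : Module.finrank K (LinearMap.ker M.mulVecLin)
      = n.choose (d + 1) - n.choose d := by
    have h2 : M.rank + Module.finrank K (LinearMap.ker M.mulVecLin)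
        = n.choose (d + 1) := by
      rw [← hdom]; exact hrn
    omega
  have pf1 : ∀ w : nsBalancingSpace K n d,
      M.mulVecLin (fun σ' => w.1 σ'.1) = 0 := by
    intro w
    obtain ⟨hw1, hw2⟩ := (NSBalAux.mem_nsBal w.1).mp w.2
    funext τ
    have hcond := hw2 (fun i => if i ∈ τ.1 then 1 else 0)
      (by rw [NSBalAux.sum_indicator]; exact le_of_eq τ.2)
    calc M.mulVecLin (fun σ' => w.1 σ'.1) τ
        = ∑ σ' : {σ : Finset (Fin n) // σ.card = d + 1},
            (if τ.1 ⊆ σ'.1 then w.1 σ'.1 else 0) := by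
          simp [hM, NSBalAux.incMat, Matrix.mulVecLin_apply, Matrix.mulVec,
            dotProduct, ite_mul]
      _ = ∑ σ ∈ Finset.univ.filter (fun σ : Finset (Fin n) => σ.card = d + 1),
            (if τ.1 ⊆ σ then w.1 σ else 0) :=
          NSBalAux.sum_subtype_filter (fun σ => if τ.1 ⊆ σ then w.1 σ else 0)
      _ = ∑ σ ∈ Finset.univ.filter (fun σ : Finset (Fin n) => σ.card = d + 1),
            (multS (fun i => if i ∈ τ.1 then 1 else 0) σ : K) * w.1 σ := by
          refine Finset.sum_congr rfl fun σ _ => ?_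
          rw [NSBalAux.multS_indicator]
          split <;> simp
      _ = 0 := hcond
  have pf2 : ∀ v : LinearMap.ker M.mulVecLin,
      (fun σ : Finset (Fin n) => if h : σ.card = d + 1 then v.1 ⟨σ, h⟩ else 0)
        ∈ nsBalancingSpace K n d := by
    intro v
    set w : Finset (Fin n) → K :=
      fun σ => if h : σ.card = d + 1 then v.1 ⟨σ, h⟩ else 0 with hw
    refine (NSBalAux.mem_nsBal w).mpr ⟨fun σ hσ => dif_neg hσ, ?_⟩
    have hv := v.2
    rw [LinearMap.mem_ker] at hv
    have hker' : ∀ τ : Finset (Fin n), τ.card = d → NSBalAux.Lfun d τ w = 0 := by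
      intro τ hτ
      have h1 : M.mulVecLin v.1 ⟨τ, hτ⟩
          = ∑ σ' : {σ : Finset (Fin n) // σ.card = d + 1},
              (if τ ⊆ σ'.1 then w σ'.1 else 0) := by
        simp only [hM, NSBalAux.incMat, Matrix.mulVecLin_apply, Matrix.mulVec,
          dotProduct]
        refine Finset.sum_congr rfl fun σ' _ => ?_
        have hwv : w σ'.1 = v.1 σ' := dif_pos σ'.2
        rw [hwv]
        split <;> simp
      have hLf : NSBalAux.Lfun d τ w
          = ∑ σ' : {σ : Finset (Fin n) // σ.card = d + 1},
              (if τ ⊆ σ'.1 then w σ'.1 else 0) :=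
        (NSBalAux.sum_subtype_filter _).symm
      rw [hLf, ← h1, hv]
      rfl
    intro S hS
    by_cases h2 : ∀ i, S i ≤ 1
    · have hTcard : (Finset.univ.filter (fun i => S i = 1)).card ≤ d := by
        calc (Finset.univ.filter (fun i => S i = 1)).card
            = ∑ i, if S i = 1 then 1 else 0 := Finset.card_filter _ _
          _ ≤ ∑ i, S i := Finset.sum_le_sum (fun i _ => by split <;> omega)
          _ ≤ d := hS
      calc ∑ σ ∈ Finset.univ.filter (fun σ : Finset (Fin n) => σ.card = d + 1),
            (multS S σ : K) * w σ
          = NSBalAux.Lfun d (Finset.univ.filter (fun i => S i = 1)) w := by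
            refine Finset.sum_congr rfl fun σ _ => ?_
            rw [NSBalAux.multS_of_le_one h2]
            split <;> simp
        _ = 0 := NSBalAux.Lfun_zero w hker'
            (d - (Finset.univ.filter (fun i => S i = 1)).card) _ (by omega)
    · push_neg at h2
      obtain ⟨i, hi⟩ := h2
      refine Finset.sum_eq_zero fun σ _ => ?_
      rw [NSBalAux.multS_eq_zero (by omega : 2 ≤ S i) σ]
      simp
  let e : nsBalancingSpace K n d ≃ₗ[K] LinearMap.ker M.mulVecLin :=
    { toFun := fun w => ⟨fun σ' => w.1 σ'.1, LinearMap.mem_ker.mpr (pf1 w)⟩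
      map_add' := fun a b => rfl
      map_smul' := fun c a => rfl
      invFun := fun v => ⟨fun σ => if h : σ.card = d + 1 then v.1 ⟨σ, h⟩ else 0, pf2 v⟩
      left_inv := fun w => Subtype.ext (funext fun σ => by
        show (if h : σ.card = d + 1 then (w.1 σ : K) else 0) = w.1 σ
        by_cases h : σ.card = d + 1
        · exact dif_pos h
        · rw [dif_neg h]
          exact (((NSBalAux.mem_nsBal w.1).mp w.2).1 σ h).symm)
      right_inv := fun v => Subtype.ext (funext fun σ' => by
        show (if h : σ'.1.card = d + 1 then v.1 ⟨σ'.1, h⟩ else 0) = v.1 σ'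
        rw [dif_pos σ'.2]) }
  rw [e.finrank_eq, hker]
end

section
/- Let d ≥ 1 and d+2 ≤ n ≤ 2d+1, let σ₀ be a (d+1)-subset of {1,…,n}, and for 1 ≤ i ≤ n−d let f_i be the linear functional on weightings of Δ^{ns}_{n,d} given by f_i(w) = ∑_{τ: |τ|=d, |σ₀∖τ|=i} ∑_{σ ⊇ τ} w(σ). Then the (n−d)×(n−d) matrix C = (c_{ij}), where c_{ij} is the common value of ∑_{τ: |σ₀∖τ|=i} [τ ⊆ σ] over all (d+1)-subsets σ with |σ₀∖σ| = j−1, is upper triangular with nonzero diagonal entries; consequently some linear combination f of f₁,…,f_{n−d} satisfies f(𝟙_σ) = 1 if σ = σ₀ and f(𝟙_σ) = 0 for every other (d+1)-subset σ, where 𝟙_σ is the indicator weighting of σ. -/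
open scoped BigOperators

/-- `N σ₀ d i σ` is the number of `d`-element subsets `τ` of `{1,…,n}` with
`|σ₀ ∖ τ| = i` and `τ ⊆ σ`; this is `f_i` evaluated on the indicator weighting of the
`(d+1)`-subset `σ`. -/
def N {n : ℕ} (σ₀ : Finset (Fin n)) (d i : ℕ) (σ : Finset (Fin n)) : ℕ :=
  (Finset.univ.filter
    (fun τ : Finset (Fin n) => τ.card = d ∧ (σ₀ \ τ).card = i ∧ τ ⊆ σ)).card

lemma erase_injOn {n : ℕ} (σ : Finset (Fin n)) : Set.InjOn σ.erase σ := by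
  intro x hx y hy h
  by_contra hne
  have hxy : x ∈ σ.erase y := Finset.mem_erase.2 ⟨hne, hx⟩
  rw [← h] at hxy
  exact (Finset.notMem_erase x σ) hxy

lemma sdiff_erase_card {n : ℕ} (σ₀ σ : Finset (Fin n)) {x : Fin n} (hx : x ∈ σ) :
    (σ₀ \ σ.erase x).card = if x ∈ σ₀ then (σ₀ \ σ).card + 1 else (σ₀ \ σ).card := by
  split
  case isTrue h =>
    have he : σ₀ \ σ.erase x = insert x (σ₀ \ σ) := by
      ext y
      simp only [Finset.mem_sdiff, Finset.mem_erase, Finset.mem_insert, not_and]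
      constructor
      · rintro ⟨hy0, hy⟩
        by_cases hyx : y = x
        · exact Or.inl hyx
        · exact Or.inr ⟨hy0, fun hyσ => (hy hyx hyσ).elim⟩
      · rintro (rfl | ⟨hy0, hyσ⟩)
        · exact ⟨h, fun hne _ => (hne rfl).elim⟩
        · exact ⟨hy0, fun _ hyσ' => hyσ hyσ'⟩
    rw [he, Finset.card_insert_of_notMem (by simp [Finset.mem_sdiff, hx])]
  case isFalse h =>
    congr 1
    ext y
    simp only [Finset.mem_sdiff, Finset.mem_erase, not_and]
    constructor
    · rintro ⟨hy0, hy⟩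
      refine ⟨hy0, fun hyσ => ?_⟩
      by_cases hyx : y = x
      · exact h (hyx ▸ hy0)
      · exact hy hyx hyσ
    · rintro ⟨hy0, hyσ⟩
      exact ⟨hy0, fun _ h' => hyσ h'⟩

lemma N_eq_filter {n d : ℕ} (σ₀ σ : Finset (Fin n)) (hσ : σ.card = d + 1) (i : ℕ) :
    N σ₀ d i σ = (σ.filter (fun x => (σ₀ \ σ.erase x).card = i)).card := by
  rw [N]
  have him : Finset.univ.filter
      (fun τ : Finset (Fin n) => τ.card = d ∧ (σ₀ \ τ).card = i ∧ τ ⊆ σ)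
      = (σ.filter (fun x => (σ₀ \ σ.erase x).card = i)).image σ.erase := by
    ext τ
    simp only [Finset.mem_filter, Finset.mem_univ, true_and, Finset.mem_image]
    constructor
    · rintro ⟨hc, hi, hsub⟩
      have h1 : (σ \ τ).card = 1 := by
        rw [Finset.card_sdiff_of_subset hsub, hσ, hc]; omega
      obtain ⟨x, hx⟩ := Finset.card_eq_one.1 h1
      have hxm : x ∈ σ \ τ := hx ▸ Finset.mem_singleton_self x
      have hxσ : x ∈ σ := (Finset.mem_sdiff.1 hxm).1
      have hxτ : x ∉ τ := (Finset.mem_sdiff.1 hxm).2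
      have hτ : τ = σ.erase x := by
        apply Finset.eq_of_subset_of_card_le
        · intro y hy
          exact Finset.mem_erase.2 ⟨fun h => hxτ (h ▸ hy), hsub hy⟩
        · rw [Finset.card_erase_of_mem hxσ, hσ, hc]; omega
      exact ⟨x, ⟨hxσ, by rw [← hτ]; exact hi⟩, hτ.symm⟩
    · rintro ⟨x, ⟨hxσ, hP⟩, rfl⟩
      exact ⟨by rw [Finset.card_erase_of_mem hxσ, hσ]; omega, hP, Finset.erase_subset _ _⟩
  rw [him, Finset.card_image_of_injOn
    ((erase_injOn σ).mono (Finset.coe_subset.2 (Finset.filter_subset _ _)))]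

lemma N_formula {n d : ℕ} (σ₀ σ : Finset (Fin n)) (h0 : σ₀.card = d + 1)
    (hσ : σ.card = d + 1) (i : ℕ) :
    N σ₀ d i σ = (if i = (σ₀ \ σ).card + 1 then d + 1 - (σ₀ \ σ).card else 0)
               + (if i = (σ₀ \ σ).card then (σ₀ \ σ).card else 0) := by
  set k := (σ₀ \ σ).card with hk
  rw [N_eq_filter σ₀ σ hσ]
  have hcongr : σ.filter (fun x => (σ₀ \ σ.erase x).card = i)
      = σ.filter (fun x => (if x ∈ σ₀ then k + 1 else k) = i) := by
    apply Finset.filter_congr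
    intro x hx
    rw [sdiff_erase_card σ₀ σ hx]
  rw [hcongr]
  -- auxiliary card facts
  have hunion : (σ \ σ₀).card + σ₀.card = (σ ∪ σ₀).card := Finset.card_sdiff_add_card σ σ₀
  have hunion' : (σ₀ \ σ).card + σ.card = (σ₀ ∪ σ).card := Finset.card_sdiff_add_card σ₀ σ
  have hucomm : σ ∪ σ₀ = σ₀ ∪ σ := Finset.union_comm _ _
  have hsd : (σ \ σ₀).card = k := by
    rw [hucomm] at hunion
    omega
  have hinter : (σ ∩ σ₀).card = d + 1 - k := by
    have := Finset.card_inter_add_card_sdiff σ σ₀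
    omega
  by_cases hi1 : i = k + 1
  · subst hi1
    have : σ.filter (fun x => (if x ∈ σ₀ then k + 1 else k) = k + 1)
        = σ ∩ σ₀ := by
      ext x
      simp only [Finset.mem_filter, Finset.mem_inter]
      constructor
      · rintro ⟨hxσ, hval⟩
        refine ⟨hxσ, ?_⟩
        by_contra hx0
        rw [if_neg hx0] at hval
        omega
      · rintro ⟨hxσ, hx0⟩
        exact ⟨hxσ, by rw [if_pos hx0]⟩
    rw [this, hinter, if_pos rfl, if_neg (by omega)]; omega
  · by_cases hi2 : i = k
    · subst hi2
      have : σ.filter (fun x => (if x ∈ σ₀ then k + 1 else k) = k)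
          = σ \ σ₀ := by
        ext x
        simp only [Finset.mem_filter, Finset.mem_sdiff]
        constructor
        · rintro ⟨hxσ, hval⟩
          refine ⟨hxσ, ?_⟩
          intro hx0
          rw [if_pos hx0] at hval
          omega
        · rintro ⟨hxσ, hx0⟩
          exact ⟨hxσ, by rw [if_neg hx0]⟩
      rw [this, hsd, if_neg (by omega), if_pos rfl]; omega
    · have : σ.filter (fun x => (if x ∈ σ₀ then k + 1 else k) = i) = ∅ := by
        apply Finset.filter_false_of_mem
        intro x _
        split <;> omega
      rw [this, if_neg hi1, if_neg hi2, Finset.card_empty]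

/-- The coefficients of the linear combination. -/
def coeffA (K : Type*) [Field K] (d : ℕ) : ℕ → K
  | 0 => 0
  | 1 => ((d : K) + 1)⁻¹
  | (k + 2) => -(((k + 1 : ℕ) : K) * coeffA K d (k + 1)) / ((d : K) + 1 - ((k + 1 : ℕ) : K))

lemma coeffA_rec (K : Type*) [Field K] [CharZero K] (d k : ℕ) (hk1 : 1 ≤ k) (hkd : k ≤ d) :
    coeffA K d (k + 1) * ((d : K) + 1 - (k : K)) + coeffA K d k * (k : K) = 0 := by
  obtain ⟨m, rfl⟩ : ∃ m, k = m + 1 := ⟨k - 1, by omega⟩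
  have hmd : m ≤ d := by omega
  have hcast : ((d - m : ℕ) : K) = (d : K) - (m : K) := by rw [Nat.cast_sub hmd]
  have hden : (d : K) - (m : K) ≠ 0 := by
    rw [← hcast]
    exact Nat.cast_ne_zero.2 (by omega)
  show coeffA K d (m + 2) * ((d : K) + 1 - ((m + 1 : ℕ) : K)) + coeffA K d (m + 1) * ((m + 1 : ℕ) : K) = 0
  simp only [coeffA]
  push_cast
  have h2 : (d : K) + 1 - ((m : K) + 1) = (d : K) - (m : K) := by ring
  rw [h2, div_mul_cancel₀ _ hden]
  ring

/-- Let `d ≥ 1`, `d+2 ≤ n ≤ 2d+1`, and `σ₀` a `(d+1)`-subset of `{1,…,n}`. Then: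
(a) for fixed `i`, the value `N σ₀ d i σ` depends only on `|σ₀ ∖ σ|` (well-definedness
of the matrix `C = (c_{ij})`);
(b) the matrix is upper triangular: `N σ₀ d i σ = 0` whenever `|σ₀ ∖ σ| = j − 1` and
`i > j` (for `1 ≤ i, j ≤ n − d`);
(c) the diagonal entries are nonzero: `N σ₀ d j σ ≠ 0` when `|σ₀ ∖ σ| = j − 1`;
(d) consequently, some linear combination `f` of `f₁,…,f_{n−d}` satisfies
`f(𝟙_σ) = 1` if `σ = σ₀` and `f(𝟙_σ) = 0` for every other `(d+1)`-subset `σ`. -/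
theorem triangular_system (K : Type*) [Field K] [CharZero K] (n d : ℕ)
    (hd : 1 ≤ d) (h1 : d + 2 ≤ n) (h2 : n ≤ 2 * d + 1)
    (σ₀ : Finset (Fin n)) (h0 : σ₀.card = d + 1) :
    ((∀ i : ℕ, ∀ σ σ' : Finset (Fin n), σ.card = d + 1 → σ'.card = d + 1 →
        (σ₀ \ σ).card = (σ₀ \ σ').card → N σ₀ d i σ = N σ₀ d i σ')
    ∧ (∀ i j : ℕ, ∀ σ : Finset (Fin n), σ.card = d + 1 → (σ₀ \ σ).card = j - 1 →
        1 ≤ i → i ≤ n - d → 1 ≤ j → j ≤ n - d → j < i → N σ₀ d i σ = 0)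
    ∧ (∀ j : ℕ, ∀ σ : Finset (Fin n), σ.card = d + 1 → (σ₀ \ σ).card = j - 1 →
        1 ≤ j → j ≤ n - d → N σ₀ d j σ ≠ 0)
    ∧ (∃ a : ℕ → K, ∀ σ : Finset (Fin n), σ.card = d + 1 →
        ∑ i ∈ Finset.Icc 1 (n - d), a i * (N σ₀ d i σ : K)
          = if σ = σ₀ then 1 else 0)) := by
  -- a basic bound: for σ of card d+1, |σ₀ \ σ| ≤ n - d - 1 and ≤ d
  have hkbound : ∀ σ : Finset (Fin n), σ.card = d + 1 →
      (σ₀ \ σ).card + d + 1 ≤ n ∧ (σ₀ \ σ).card ≤ d + 1 := by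
    intro σ hσ
    constructor
    · have h1 : (σ₀ \ σ).card + σ.card = (σ₀ ∪ σ).card := Finset.card_sdiff_add_card σ₀ σ
      have h2 : (σ₀ ∪ σ).card ≤ n := by
        have := Finset.card_le_univ (σ₀ ∪ σ)
        simpa using this
      omega
    · have := Finset.card_le_card (Finset.sdiff_subset (s := σ₀) (t := σ))
      omega
  refine ⟨?_, ?_, ?_, ?_⟩
  · intro i σ σ' hσ hσ' hcard
    rw [N_formula σ₀ σ h0 hσ, N_formula σ₀ σ' h0 hσ', hcard]
  · intro i j σ hσ hj hi1 hi2 hj1 hj2 hji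
    rw [N_formula σ₀ σ h0 hσ, hj, if_neg (by omega), if_neg (by omega)]
  · intro j σ hσ hj hj1 hj2
    rw [N_formula σ₀ σ h0 hσ, hj]
    have hjd : j ≤ d + 1 := by omega
    rw [if_pos (by omega)]
    omega
  · refine ⟨coeffA K d, ?_⟩
    intro σ hσ
    set k := (σ₀ \ σ).card with hk
    obtain ⟨hb1, hb2⟩ := hkbound σ hσ
    have hσeq : (σ = σ₀) ↔ k = 0 := by
      constructor
      · rintro rfl
        simp [hk]
      · intro h
        have hsub : σ₀ ⊆ σ := by
          rw [← Finset.sdiff_eq_empty_iff_subset]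
          exact Finset.card_eq_zero.1 h
        exact (Finset.eq_of_subset_of_card_le hsub (by omega)).symm
    have hsum : ∑ i ∈ Finset.Icc 1 (n - d), coeffA K d i * (N σ₀ d i σ : K)
        = (if k + 1 ∈ Finset.Icc 1 (n - d) then coeffA K d (k + 1) * ((d + 1 - k : ℕ) : K) else 0)
        + (if k ∈ Finset.Icc 1 (n - d) then coeffA K d k * ((k : ℕ) : K) else 0) := by
      have : ∀ i ∈ Finset.Icc 1 (n - d),
          coeffA K d i * (N σ₀ d i σ : K)
          = (if i = k + 1 then coeffA K d i * ((d + 1 - k : ℕ) : K) else 0)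
          + (if i = k then coeffA K d i * ((k : ℕ) : K) else 0) := by
        intro i _
        rw [N_formula σ₀ σ h0 hσ, ← hk]
        push_cast
        split <;> split <;> simp_all
      rw [Finset.sum_congr rfl this, Finset.sum_add_distrib,
        Finset.sum_ite_eq' (Finset.Icc 1 (n - d)) (k + 1)
          (fun i => coeffA K d i * ((d + 1 - k : ℕ) : K)),
        Finset.sum_ite_eq' (Finset.Icc 1 (n - d)) k
          (fun i => coeffA K d i * ((k : ℕ) : K))]
    rw [hsum]
    have hk1mem : k + 1 ∈ Finset.Icc 1 (n - d) := by
      rw [Finset.mem_Icc]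
      omega
    rw [if_pos hk1mem]
    by_cases hk0 : k = 0
    · rw [hk0]
      rw [if_neg (by simp), if_pos (hσeq.2 hk0)]
      have hne : (d : K) + 1 ≠ 0 := by
        have : ((d + 1 : ℕ) : K) ≠ 0 := Nat.cast_ne_zero.2 (by omega)
        push_cast at this
        exact this
      show ((d : K) + 1)⁻¹ * ((d + 1 - 0 : ℕ) : K) + 0 = 1
      push_cast
      field_simp
      norm_num
    · have hkmem : k ∈ Finset.Icc 1 (n - d) := by
        rw [Finset.mem_Icc]
        omega
      rw [if_pos hkmem, if_neg (fun h => hk0 (hσeq.1 h))]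
      have hcast : ((d + 1 - k : ℕ) : K) = (d : K) + 1 - (k : K) := by
        push_cast [Nat.cast_sub (by omega : k ≤ d + 1)]
        ring
      rw [hcast]
      exact coeffA_rec K d k (by omega) (by omega)
end
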